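/- arXiv:1905.04892 — 9 statements merged into one kernel-verified Lean document; each statement's English description precedes it below -/
import Mathlib

section
/- Define T : ℕ × ℕ → ℕ by T(1,r)=1, T(2,r)=r+1, and T(n+1,r)=T(n,2^r) for n ≥ 2. Let p, r be positive integers with p ≥ 2 and let n = T(p,r). Then for any coloring c of the (p−1)-element subsets of [n] = {1,…,n} with r colors, there exists a subset P ⊆ [n] with |P| = p such that c(P \ {min P}) = c(P \ {max P}). -/
/-- The tower function `T`: `T 1 r = 1`, `T 2 r = r + 1`, and
`T (n+1) r = T n (2 ^ r)` for `n ≥ 2`. -/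
def T : ℕ → ℕ → ℕ
  | 0, _ => 0
  | 1, _ => 1
  | 2, r => r + 1
  | (n + 3), r => T (n + 2) (2 ^ r)

/-!
Induction on `p`, keeping the ground set fixed and enlarging the palette. Given an
`r`-colouring `c` of `(p+1)`-sets, colour each `p`-set `S` by the set of colours
`c (S ∪ {x})` over the admissible tops `x > max S`; this is a `2 ^ r`-colouring. A `(p+1)`-set
`P'` with `P'_*` and `P'^*` equally coloured under it has `c P'` among the colours of the tops of
`P'_*`, so some `x > max P'` has `c (P'_* ∪ {x}) = c P'`, and `P' ∪ {x}` is the required set.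
For `p = 1` it is the pigeonhole principle on singletons.
-/

open Finset

section

variable {α κ : Type*} [LinearOrder α]

def ShiftMonochromatic (c : Finset α → κ) (P : Finset α) : Prop :=
  ∀ h : P.Nonempty, c (P.erase (P.min' h)) = c (P.erase (P.max' h))

theorem shiftMonochromatic_insert_of_forall_lt {c : Finset α → κ} {P : Finset α} {x : α}
    (hP : P.Nonempty) (hx : ∀ y ∈ P, y < x)
    (hc : c (insert x (P.erase (P.min' hP))) = c P) :
    ShiftMonochromatic c (insert x P) := by
  intro h
  have hxP : x ∉ P := fun hx' => (hx x hx').false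
  have hmin : (insert x P).min' h = P.min' hP := by
    rw [min'_insert x P hP]
    exact min_eq_right (hx _ (P.min'_mem hP)).le
  have hmax : (insert x P).max' h = x := by
    rw [max'_insert x P hP]
    exact max_eq_left (hx _ (P.max'_mem hP)).le
  rw [hmin, hmax, erase_insert hxP, erase_insert_of_ne (hx _ (P.min'_mem hP)).ne']
  exact hc

theorem exists_shiftMonochromatic_pair [Fintype κ] (c : Finset α → κ) {s : Finset α}
    (hs : Fintype.card κ < s.card) :
    ∃ P ⊆ s, P.card = 2 ∧ ShiftMonochromatic c P := by
  obtain ⟨a, ha, b, hb, hab, hc⟩ :=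
    exists_ne_map_eq_of_card_lt_of_maps_to (t := univ) (f := fun x => c {x})
      (by simpa using hs) (fun _ _ => mem_coe.2 (mem_univ _))
  have pair {a b : α} (ha : a ∈ s) (hb : b ∈ s) (hab : a < b) (hc : c {a} = c {b}) :
      ∃ P ⊆ s, P.card = 2 ∧ ShiftMonochromatic c P := by
    refine ⟨insert b {a}, insert_subset hb (singleton_subset_iff.2 ha),
      card_pair hab.ne', shiftMonochromatic_insert_of_forall_lt (singleton_nonempty a)
        (by simpa using hab) ?_⟩
    simpa using hc.symm
  rcases lt_or_gt_of_ne hab with hlt | hgt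
  · exact pair ha hb hlt hc
  · exact pair hb ha hgt hc.symm

def topExtensionColors [DecidableEq κ] (c : Finset α → κ) (s S : Finset α) : Finset κ :=
  open Classical in
  (s.filter fun x => ∀ y ∈ S, y < x).image fun x => c (insert x S)

theorem exists_shiftMonochromatic_of_topExtensionColors [DecidableEq κ] {c : Finset α → κ}
    {s P : Finset α} (hPs : P ⊆ s) (hP : 2 ≤ P.card)
    (hcol : ShiftMonochromatic (topExtensionColors c s) P) :
    ∃ Q ⊆ s, Q.card = P.card + 1 ∧ ShiftMonochromatic c Q := by
  have hne : P.Nonempty := card_pos.1 (by omega)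
  have hmin_lt_max : P.min' hne < P.max' hne := P.min'_lt_max'_of_card (by omega)
  have hcP : c P ∈ topExtensionColors c s (P.erase (P.max' hne)) := by
    refine mem_image.2 ⟨P.max' hne, mem_filter.2 ⟨hPs (P.max'_mem hne), fun y hy => ?_⟩, ?_⟩
    · exact lt_of_le_of_ne (P.le_max' y (mem_of_mem_erase hy)) (ne_of_mem_erase hy)
    · rw [insert_erase (P.max'_mem hne)]
  rw [← hcol hne] at hcP
  obtain ⟨x, hx, hxc⟩ := mem_image.1 hcP
  obtain ⟨hxs, hx_top⟩ := mem_filter.1 hx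
  have hx_gt : ∀ y ∈ P, y < x := fun y hy =>
    (P.le_max' y hy).trans_lt (hx_top _ (mem_erase.2 ⟨hmin_lt_max.ne', P.max'_mem hne⟩))
  exact ⟨insert x P, insert_subset hxs hPs,
    card_insert_of_notMem fun hxP => (hx_gt x hxP).false,
    shiftMonochromatic_insert_of_forall_lt hne hx_gt hxc⟩

theorem exists_shiftMonochromatic (p : ℕ) {κ : Type*} [Fintype κ] (c : Finset α → κ)
    {s : Finset α} (hs : T (p + 2) (Fintype.card κ) ≤ s.card) :
    ∃ P ⊆ s, P.card = p + 2 ∧ ShiftMonochromatic c P := by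
  classical
  induction p generalizing κ with
  | zero => exact exists_shiftMonochromatic_pair c hs
  | succ p ih =>
    have hs' : T (p + 2) (Fintype.card (Finset κ)) ≤ s.card := by
      rwa [Fintype.card_finset]
    obtain ⟨P, hPs, hPcard, hP⟩ := ih (topExtensionColors c s) hs'
    obtain ⟨Q, hQs, hQcard, hQ⟩ :=
      exists_shiftMonochromatic_of_topExtensionColors hPs (by omega) hP
    exact ⟨Q, hQs, by omega, hQ⟩

end

theorem tower_ramsey_general (p r : ℕ) (hp : 2 ≤ p) (n : ℕ) (hn : n = T p r)
    (c : Finset ℕ → Fin r) :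
    ∃ P : Finset ℕ, P ⊆ Finset.Icc 1 n ∧ P.card = p ∧
      ∀ h : P.Nonempty, c (P.erase (P.min' h)) = c (P.erase (P.max' h)) := by
  obtain ⟨q, rfl⟩ : ∃ q, p = q + 2 := ⟨p - 2, by omega⟩
  have hs : T (q + 2) (Fintype.card (Fin r)) ≤ (Icc 1 n).card := by
    rw [Fintype.card_fin, Nat.card_Icc, hn]
    omega
  exact exists_shiftMonochromatic q c hs

/-- For any `r`-coloring of the `(p-1)`-element subsets of `[n] = {1, …, n}` with
`n = T p r`, there is a `p`-element subset `P ⊆ [n]` such that `P \ {min P}` and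
`P \ {max P}` get the same color. -/
theorem tower_ramsey (p r : ℕ) (hp : 2 ≤ p) (hr : 1 ≤ r) (n : ℕ) (hn : n = T p r)
    (c : Finset ℕ → Fin r) :
    ∃ P : Finset ℕ, P ⊆ Finset.Icc 1 n ∧ P.card = p ∧
      ∀ h : P.Nonempty, c (P.erase (P.min' h)) = c (P.erase (P.max' h)) :=
  tower_ramsey_general p r hp n hn c
end

section
/- If a finite group G has the d-uniform Hales–Jewett property, then for every positive integer k, G has the kd-uniform Hales–Jewett property. -/
/-! Pull a colouring of `G^(kN)` back to `G^N` along the `k`-fold repetition map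
`x ↦ x x ⋯ x`. Repeating `k` times a monochromatic uniform word of degree `d` for the
pulled-back colouring gives a monochromatic uniform word of degree `kd`, since
evaluation commutes with repetition. -/

/-- Evaluation of a variable word: letters are left unchanged, the variable `v_s`
is replaced by `s • x`. -/
def evalW {S X : Type*} [SMul S X] {N : ℕ} (w : Fin N → X ⊕ S) (x : X) : Fin N → X :=
  fun i => Sum.elim id (fun s => s • x) (w i)

open scoped Classical in
/-- `w` is a uniform variable word of degree `d`: every variable `v_s` (`s : S`)
occurs the same positive number of times, and the total number of variable
positions is `d`. -/
def IsUnifWord {S X : Type*} {N : ℕ} (w : Fin N → X ⊕ S) (d : ℕ) : Prop :=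
  (∃ m : ℕ, 0 < m ∧ ∀ s : S,
      (Finset.univ.filter (fun i => w i = Sum.inr s)).card = m) ∧
  (Finset.univ.filter (fun i => (w i).isRight = true)).card = d

/-- `G` has the `d`-uniform Hales–Jewett property. -/
def UHJP (G : Type*) [Group G] (d : ℕ) : Prop :=
  ∀ r : ℕ, ∃ N : ℕ, ∀ c : (Fin N → G) → Fin r,
    ∃ w : Fin N → G ⊕ G, IsUnifWord w d ∧
      ∀ g g' : G, c (evalW w g) = c (evalW w g')

/-- `(S, X)` has the `(E, d)`-uniform Hales–Jewett property. -/
def PairUHJP (S X : Type*) [SMul S X] (E : X → X → Prop) (d : ℕ) : Prop :=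
  ∀ r : ℕ, ∃ N : ℕ, ∀ c : (Fin N → X) → Fin r,
    ∃ w : Fin N → X ⊕ S, IsUnifWord w d ∧
      ∀ x x' : X, E x x' → c (evalW w x) = c (evalW w x')

open Finset

lemma Fin.card_filter_modNat (k : ℕ) {N : ℕ} (P : Fin N → Prop) [DecidablePred P] :
    #{j : Fin (k * N) | P j.modNat} = k * #{i | P i} := by
  calc #{j : Fin (k * N) | P j.modNat}
      = #{p : Fin k × Fin N | P p.2} := card_equiv finProdFinEquiv.symm (by simp)
    _ = k * #{i | P i} := by
      rw [← univ_product_univ, filter_product_right, card_product]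
      simp

lemma evalW_repeat {S X : Type*} [SMul S X] {N : ℕ} (k : ℕ) (w : Fin N → X ⊕ S) (x : X) :
    evalW (Fin.repeat k w) x = Fin.repeat k (evalW w x) :=
  rfl

open scoped Classical in
lemma IsUnifWord.repeat {S X : Type*} {N d k : ℕ} {w : Fin N → X ⊕ S} (hw : IsUnifWord w d)
    (hk : 0 < k) : IsUnifWord (Fin.repeat k w) (k * d) := by
  obtain ⟨⟨m, hm, hcount⟩, hdeg⟩ := hw
  refine ⟨⟨k * m, Nat.mul_pos hk hm, fun s => ?_⟩, ?_⟩
  · rw [← hcount s]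
    exact Fin.card_filter_modNat k (fun i => w i = Sum.inr s)
  · rw [← hdeg]
    exact Fin.card_filter_modNat k (fun i => (w i).isRight = true)

theorem UHJP_mul_general (G : Type*) [Group G] (d : ℕ) (hG : UHJP G d)
    (k : ℕ) (hk : 0 < k) : UHJP G (k * d) := by
  intro r
  obtain ⟨N, hN⟩ := hG r
  refine ⟨k * N, fun c => ?_⟩
  obtain ⟨w, hw, hmono⟩ := hN (fun x => c (Fin.repeat k x))
  exact ⟨Fin.repeat k w, hw.repeat hk, by simpa only [evalW_repeat] using hmono⟩

/-- If a finite group `G` has the `d`-UHJP then it has the `k·d`-UHJP for every `k ≥ 1`. -/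
theorem UHJP_mul (G : Type*) [Group G] [Fintype G] (d : ℕ) (hG : UHJP G d)
    (k : ℕ) (hk : 0 < k) : UHJP G (k * d) :=
  UHJP_mul_general G d hG k hk
end

section
/- Let G be a finite group acting on a finite set X, H a subgroup of G, E an equivalence relation on X, and d ∈ ℕ. Suppose (H,X) has the (E,d)-UHJP. Then for all n, r ∈ ℕ there exists N such that for any r-coloring c of X^N there exists a sequence (W_1,…,W_n) of uniform H-variable words over X, each of degree d, with total length N, such that for every (x_1,…,x_n) ∈ X^n, the set {W_1(x_1′)⌢⋯⌢W_n(x_n′) : x_i′ E x_i for all i} is monochromatic under c. -/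
open scoped Classical in
/-- A list word `w` over letters `X` and variables indexed by `S` is uniform of degree `d`:
every variable occurs the same positive number of times and `d` is the total number of
variable positions. -/
def IsUnifWordL {S X : Type*} (w : List (X ⊕ S)) (d : ℕ) : Prop :=
  (∃ m : ℕ, 0 < m ∧ ∀ s : S,
      (w.filter (fun a => decide (a = Sum.inr s))).length = m) ∧
  (w.filter (fun a => (a : X ⊕ S).isRight)).length = d

/-- Evaluation of a list word at `x`. -/
def evalL {S X : Type*} [SMul S X] (w : List (X ⊕ S)) (x : X) : List X :=
  w.map (Sum.elim id (fun s => s • x))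

/-- The concatenation `W₁(x₁)⌢⋯⌢Wₙ(xₙ)`. -/
def blockEval {S X : Type*} [SMul S X] {n : ℕ} (ws : Fin n → List (X ⊕ S))
    (x : Fin n → X) : List X :=
  (List.ofFn (fun i => evalL (ws i) (x i))).flatten

open scoped Classical

lemma lengthFilter_ofFn {α : Type*} {N : ℕ} (w : Fin N → α) (p : α → Bool) :
    ((List.ofFn w).filter p).length = (Finset.univ.filter (fun i => p (w i) = true)).card := by
  rw [List.ofFn_eq_map, List.filter_map, List.length_map, Fin.univ_def]
  simp only [Finset.filter, Finset.card, Multiset.filter_coe, Multiset.coe_card]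
  congr 1
  apply List.filter_congr
  intro x _
  simp [Function.comp]

lemma isUnifWordL_ofFn {S X : Type*} {N : ℕ} (w : Fin N → X ⊕ S) {d : ℕ}
    (hw : IsUnifWord w d) : IsUnifWordL (List.ofFn w) d := by
  obtain ⟨⟨m, hm, hms⟩, hd⟩ := hw
  constructor
  · refine ⟨m, hm, fun s => ?_⟩
    rw [lengthFilter_ofFn]
    rw [← hms s]
    congr 1
    apply Finset.filter_congr
    intro i _
    simp
  · rw [lengthFilter_ofFn]
    exact hd

lemma get_append_cast {α : Type*} {a b : ℕ} (l₁ l₂ : List α) (h₁ : l₁.length = a)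
    (h₂ : l₂.length = b) (h : (l₁ ++ l₂).length = a + b) :
    (fun j : Fin (a+b) => (l₁ ++ l₂).get (Fin.cast h.symm j)) =
    Fin.append (fun i : Fin a => l₁.get (Fin.cast h₁.symm i))
      (fun i : Fin b => l₂.get (Fin.cast h₂.symm i)) := by
  subst h₁ h₂
  funext j
  simp only [Fin.append, Fin.addCases, List.get_eq_getElem, Fin.coe_cast, List.getElem_append]
  split <;> simp

lemma get_cast_congr {α : Type*} {N : ℕ} (L L' : List α) (e : L = L')
    (h : L.length = N) (h' : L'.length = N) :
    (fun j : Fin N => L.get (Fin.cast h.symm j)) =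
      fun j : Fin N => L'.get (Fin.cast h'.symm j) := by
  subst e; rfl

/-- Shelah-type lemma: if `(H, X)` has the `(E, d)`-UHJP then for all `n, r` there is `N` such
that any `r`-coloring of `X^N` admits uniform `H`-variable words `W₁, …, Wₙ` over `X` of degree
`d` and total length `N` with `{W₁(x₁')⌢⋯⌢Wₙ(xₙ') : xᵢ' E xᵢ ∀i}` monochromatic for every
`(x₁,…,xₙ) ∈ Xⁿ`. -/
theorem shelah_lemma (G X : Type*) [Group G] [Fintype G] [Fintype X] [MulAction G X]
    (H : Subgroup G) (E : X → X → Prop) (hE : Equivalence E) (d : ℕ)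
    (h : PairUHJP (↥H) X E d) (n r : ℕ) :
    ∃ N : ℕ, ∀ c : (Fin N → X) → Fin r,
      ∃ ws : Fin n → List (X ⊕ ↥H),
        (∀ i, IsUnifWordL (ws i) d) ∧
        ∃ hl : ∀ x : Fin n → X, (blockEval ws x).length = N,
          ∀ x x' : Fin n → X, (∀ i, E (x i) (x' i)) →
            c (fun j => (blockEval ws x).get (Fin.cast (hl x).symm j)) =
              c (fun j => (blockEval ws x').get (Fin.cast (hl x').symm j)) := by
  induction n generalizing r with
  | zero =>
    refine ⟨0, fun c => ⟨fun i => i.elim0, fun i => i.elim0, fun x => by simp [blockEval],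
      fun x x' _ => congrArg c (funext fun j => j.elim0)⟩⟩
  | succ n ih =>
    obtain ⟨N₂, hN₂⟩ := ih (Fintype.card (X → Fin r))
    obtain ⟨N₁, hN₁⟩ := h (Fintype.card ((Fin N₂ → X) → Fin r))
    refine ⟨N₁ + N₂, fun c => ?_⟩
    let e₁ : ((Fin N₂ → X) → Fin r) ≃ Fin _ := Fintype.equivFin _
    let e₂ : (X → Fin r) ≃ Fin _ := Fintype.equivFin _
    obtain ⟨w, hw, hwmono⟩ := hN₁ (fun u => e₁ (fun v => c (Fin.append u v)))
    obtain ⟨ws', hws'unif, hl', hmono'⟩ :=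
      hN₂ (fun v => e₂ (fun z => c (Fin.append (evalW w z) v)))
    have hsplit : ∀ x : Fin (n+1) → X,
        blockEval (Fin.cons (List.ofFn w) ws') x
          = List.ofFn (evalW w (x 0)) ++ blockEval ws' (fun k => x k.succ) := by
      intro x
      simp only [blockEval, List.ofFn_succ, Fin.cons_zero, Fin.cons_succ, List.flatten_cons]
      congr 1
      rw [evalL, List.map_ofFn]
      rfl
    have hlen : ∀ x : Fin (n+1) → X,
        (blockEval (Fin.cons (List.ofFn w) ws') x).length = N₁ + N₂ := by
      intro x
      rw [hsplit x]
      simp [hl' (fun k => x k.succ)]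
    refine ⟨Fin.cons (List.ofFn w) ws', ?_, hlen, ?_⟩
    · intro i
      refine Fin.cases ?_ (fun k => ?_) i
      · rw [Fin.cons_zero]; exact isUnifWordL_ofFn w hw
      · rw [Fin.cons_succ]; exact hws'unif k
    · intro x x' hEx
      have key : ∀ x : Fin (n+1) → X,
          (fun j => (blockEval (Fin.cons (List.ofFn w) ws') x).get (Fin.cast (hlen x).symm j))
            = Fin.append (evalW w (x 0))
                (fun i => (blockEval ws' (fun k => x k.succ)).get
                  (Fin.cast (hl' (fun k => x k.succ)).symm i)) := by
        intro x
        rw [get_cast_congr _ _ (hsplit x) (hlen x)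
          (by rw [List.length_append, List.length_ofFn, hl'])]
        rw [get_append_cast (List.ofFn (evalW w (x 0))) (blockEval ws' fun k => x k.succ)
          List.length_ofFn (hl' (fun k => x k.succ))
          (by rw [List.length_append, List.length_ofFn, hl'])]
        congr 1
        funext i
        simp [List.get_ofFn]
      rw [key x, key x']
      set vx := fun i => (blockEval ws' (fun k => x k.succ)).get
        (Fin.cast (hl' (fun k => x k.succ)).symm i) with hvx
      set vx' := fun i => (blockEval ws' (fun k => x' k.succ)).get
        (Fin.cast (hl' (fun k => x' k.succ)).symm i) with hvx'
      have h2 : ∀ z : X, c (Fin.append (evalW w z) vx) = c (Fin.append (evalW w z) vx') := by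
        have := hmono' (fun k => x k.succ) (fun k => x' k.succ) (fun k => hEx k.succ)
        have := e₂.injective this
        exact fun z => congrFun this z
      have h1 : ∀ v, c (Fin.append (evalW w (x 0)) v) = c (Fin.append (evalW w (x' 0)) v) := by
        have := hwmono (x 0) (x' 0) (hEx 0)
        have := e₁.injective this
        exact fun v => congrFun this v
      rw [h2 (x 0), h1 vx']
end

section
/- Let G be a finite group acting on a finite set X, H a subgroup of G with the d-UHJP, and y ∈ X. Let E_y be the equivalence relation on X with one class equal to the orbit Hy and all other classes singletons. Then (H,X) has the (E_y, d)-UHJP: for every r there exists N such that for every r-coloring of X^N there is a uniform H-variable word W over X of length N and degree d with {W(x) : x ∈ Hy} monochromatic. -/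
/-- If the subgroup `H` has the `d`-UHJP and `y ∈ X`, then `(H, X)` has the `(E_y, d)`-UHJP,
where `E_y` has the orbit `Hy` as one class and all other classes singletons. -/
theorem orbit_pairUHJP (G X : Type*) [Group G] [Fintype G] [Fintype X] [MulAction G X]
    (H : Subgroup G) (d : ℕ) (hH : UHJP (↥H) d) (y : X) :
    PairUHJP (↥H) X
      (fun x x' => x = x' ∨ (x ∈ MulAction.orbit (↥H) y ∧ x' ∈ MulAction.orbit (↥H) y))
      d := by
  intro r
  obtain ⟨N, hN⟩ := hH r
  refine ⟨N, fun c => ?_⟩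
  obtain ⟨w, hw, hmono⟩ := hN (fun g => c (fun i => g i • y))
  refine ⟨fun i => (w i).map (· • y) id, ?_, ?_⟩
  · obtain ⟨⟨m, hm, hms⟩, hd⟩ := hw
    have key : ∀ (s : ↥H) i, ((w i).map (· • y) id = Sum.inr s) ↔ (w i = Sum.inr s) := by
      intro s i; cases h : w i <;> simp
    constructor
    · refine ⟨m, hm, fun s => ?_⟩
      rw [← hms s]
      apply Finset.card_nbij id (by intro i hi; simpa [key] using hi) ?_ ?_
      · intro a _ b _ h; exact h
      · intro a ha; exact ⟨a, by simpa [key] using ha, rfl⟩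
    · rw [← hd]
      apply Finset.card_nbij id ?_ ?_ ?_
      · intro i hi
        simp only [Finset.mem_filter, Finset.mem_univ, true_and] at hi ⊢
        cases h : w i <;> simp [h] at hi ⊢
      · intro a _ b _ h; exact h
      · intro i hi
        refine ⟨i, ?_, rfl⟩
        simp only [Finset.mem_filter, Finset.mem_univ, true_and] at hi ⊢
        cases h : w i <;> simp [h] at hi ⊢
  · rintro x x' (rfl | ⟨⟨g, rfl⟩, ⟨g', rfl⟩⟩)
    · rfl
    have key : ∀ (g : ↥H), evalW (fun i => (w i).map (· • y) id) (g • y)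
        = fun i => (evalW w g i) • y := by
      intro g
      funext i
      simp only [evalW]
      cases h : w i <;> simp [h, smul_smul, smul_eq_mul]
    rw [key, key]
    exact hmono g g'
end

section
/- Let G be a finite group and H a subgroup of G. If H has the d-UHJP, then (H,G) has the (E_{G|H}, d^p)-UHJP, where p = [G : H] is the index of H in G and E_{G|H} is the equivalence relation on G whose classes are the right cosets Hg. That is, for every r there exists N such that for every r-coloring of G^N there is a uniform H-variable word W over G of length N and degree d^p such that for each g ∈ G the set {W(g′) : g′ ∈ Hg} is monochromatic. -/
/- ## Helper lemmas -/

open scoped Classical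

section Helpers

private lemma card_filter_iff {α : Type*} [Fintype α] {p q : α → Prop}
    {instp : DecidablePred p} {instq : DecidablePred q} (h : ∀ a, p a ↔ q a) :
    (@Finset.filter α p instp Finset.univ).card
      = (@Finset.filter α q instq Finset.univ).card := by
  letI := instp
  letI := instq
  refine congrArg Finset.card ?_
  refine Eq.trans (Finset.filter_congr (q := q) fun a _ => h a) ?_
  congr 1

private lemma card_filter_equiv {α β : Type*} [Fintype α] [Fintype β] (e : α ≃ β)
    {p : α → Prop} {q : β → Prop} {instp : DecidablePred p} {instq : DecidablePred q}
    (h : ∀ a, p a ↔ q (e a)) :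
    (@Finset.filter α p instp Finset.univ).card
      = (@Finset.filter β q instq Finset.univ).card := by
  letI := instp
  letI := instq
  apply Finset.card_bij (fun a _ => e a)
  · intro a ha
    simp only [Finset.mem_filter, Finset.mem_univ, true_and] at ha ⊢
    exact (h a).mp ha
  · intro a₁ _ a₂ _ hh
    exact e.injective hh
  · intro b hb
    refine ⟨e.symm b, ?_, by simp⟩
    simp only [Finset.mem_filter, Finset.mem_univ, true_and] at hb ⊢
    rw [h (e.symm b)]
    simpa using hb

private lemma card_filter_sigma {M : ℕ} {ns : Fin M → ℕ}
    {P : (Σ k : Fin M, Fin (ns k)) → Prop} {instP : DecidablePred P} (f : Fin M → ℕ)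
    (hf : ∀ k, (@Finset.filter _ (fun i => P ⟨k, i⟩) (fun i => instP ⟨k, i⟩)
        Finset.univ).card = f k) :
    (@Finset.filter _ P instP Finset.univ).card = ∑ k, f k := by
  letI := instP
  rw [Finset.card_filter, ← Finset.univ_sigma_univ, Finset.sum_sigma]
  refine Finset.sum_congr rfl fun k _ => ?_
  rw [← hf k, Finset.card_filter]

/-- Transporting a uniform word along a map of the letters. -/
private lemma isUnifWord_map {X Y S : Type*} {N : ℕ} (w : Fin N → X ⊕ S) (f : X → Y) {m : ℕ}
    (h : IsUnifWord w m) : IsUnifWord (fun i => Sum.map f id (w i)) m := by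
  obtain ⟨⟨k, hk, hcount⟩, hdeg⟩ := h
  constructor
  · refine ⟨k, hk, fun s => ?_⟩
    rw [← hcount s]
    apply card_filter_iff
    intro i
    cases hwi : w i <;> simp [hwi]
  · rw [← hdeg]
    apply card_filter_iff
    intro i
    cases hwi : w i <;> simp [hwi]

end Helpers

section Main

universe u

variable {G : Type u} [Group G] [Fintype G] {H : Subgroup G} {d : ℕ}

set_option linter.unusedSectionVars false

private lemma subgroup_smul_def (s : ↥H) (x : G) : s • x = (s : G) * x := rfl

private lemma subgroup_self_smul (s h : ↥H) : s • h = s * h := rfl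

/-- The `κ`-valued version of the `d`-UHJP of `H`. -/
private lemma uhjp_kappa (hH : UHJP (↥H) d) (κ : Type u) [Fintype κ] :
    ∃ N : ℕ, ∀ c : (Fin N → ↥H) → κ, ∃ w : Fin N → ↥H ⊕ ↥H, IsUnifWord w d ∧
      ∀ g g' : ↥H, c (evalW w g) = c (evalW w g') := by
  obtain ⟨N, hN⟩ := hH (Fintype.card κ)
  refine ⟨N, fun c => ?_⟩
  obtain ⟨w, hw, hinv⟩ := hN (fun x => Fintype.equivFin κ (c x))
  exact ⟨w, hw, fun g g' => (Fintype.equivFin κ).injective (hinv g g')⟩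

/-- The pair property for a finite list of right cosets, with `κ`-valued colorings. -/
private def GoodL (H : Subgroup G) (d : ℕ) (L : List G) : Prop :=
  ∀ (κ : Type u) [Fintype κ], ∃ n : ℕ, ∀ c : (Fin n → G) → κ,
    ∃ w : Fin n → G ⊕ ↥H, IsUnifWord w (d ^ L.length) ∧
      ∀ g ∈ L, ∀ h h' : ↥H, c (evalW w ((h : G) * g)) = c (evalW w ((h' : G) * g))

/-- Base case: a single right coset. -/
private lemma goodL_singleton (hH : UHJP (↥H) d) (g₀ : G) : GoodL H d [g₀] := by
  intro κ _
  obtain ⟨N, hN⟩ := uhjp_kappa hH κ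
  refine ⟨N, fun c => ?_⟩
  obtain ⟨V, hVu, hVinv⟩ := hN (fun z => c fun k => ((z k : ↥H) : G) * g₀)
  refine ⟨fun k => Sum.map (fun b : ↥H => (b : G) * g₀) id (V k), ?_, ?_⟩
  · simpa [List.length_singleton, pow_one] using isUnifWord_map V (fun b : ↥H => (b : G) * g₀) hVu
  · intro g hg h h'
    have hg0 : g = g₀ := by simpa using hg
    subst hg0
    have key : ∀ h : ↥H,
        evalW (fun k => Sum.map (fun b : ↥H => (b : G) * g) id (V k)) ((h : G) * g)
          = fun k => ((evalW V h k : ↥H) : G) * g := by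
      intro h
      funext k
      rcases hVk : V k with b | s <;>
        simp [evalW, hVk, mul_assoc, subgroup_smul_def, subgroup_self_smul]
    rw [key h, key h']
    exact hVinv h h'

/-- The multi-row lemma: a family of words (one per row), each uniform of degree
`d ^ L.length`, such that an arbitrary coloring of the joint evaluations is invariant
under moving each row's evaluation point within a right coset of the list `L`. -/
private lemma rowLemma (L : List G) (hGL : GoodL H d L) :
    ∀ (t : ℕ) (κ' : Type u) [Fintype κ'], ∃ ns : Fin t → ℕ,
      ∀ C : (∀ a : Fin t, Fin (ns a) → G) → κ',
        ∃ w : ∀ a : Fin t, Fin (ns a) → G ⊕ ↥H,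
          (∀ a, IsUnifWord (w a) (d ^ L.length)) ∧
          ∀ y y' : Fin t → G,
            (∀ a, y a = y' a ∨ ∃ g ∈ L, ∃ h h' : ↥H, y a = (h : G) * g ∧ y' a = (h' : G) * g) →
            C (fun a => evalW (w a) (y a)) = C (fun a => evalW (w a) (y' a)) := by
  intro t
  induction t with
  | zero =>
    intro κ' _
    refine ⟨Fin.elim0, fun C => ⟨fun a => a.elim0, fun a => a.elim0, fun y y' _ => ?_⟩⟩
    congr 1
    funext a
    exact a.elim0
  | succ t ih =>
    intro κ' _
    obtain ⟨n₀, hn₀⟩ := hGL ((Fin t → G) → κ')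
    obtain ⟨ns', hns'⟩ := ih ((Fin n₀ → G) → κ')
    refine ⟨Fin.cons n₀ ns', fun C => ?_⟩
    obtain ⟨w', hw'u, hw'inv⟩ := hns' (fun ρ => fun ξ : Fin n₀ → G => C (Fin.cons ξ ρ))
    obtain ⟨w₀, hw₀u, hw₀inv⟩ :=
      hn₀ (fun ξ => fun yv : Fin t → G => C (Fin.cons ξ (fun a => evalW (w' a) (yv a))))
    refine ⟨(Fin.cons w₀ w' :
      ∀ a : Fin (t+1), Fin ((Fin.cons n₀ ns' : Fin (t+1) → ℕ) a) → G ⊕ ↥H), ?_, ?_⟩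
    · intro a
      refine Fin.cases ?_ ?_ a
      · exact hw₀u
      · exact hw'u
    · intro y y' hy
      have hrow : ∀ z : Fin (t + 1) → G,
          (fun a => evalW ((Fin.cons w₀ w' :
              ∀ a : Fin (t+1), Fin ((Fin.cons n₀ ns' : Fin (t+1) → ℕ) a) → G ⊕ ↥H) a) (z a))
            = (Fin.cons (evalW w₀ (z 0)) (fun a => evalW (w' a) (z a.succ)) :
                ∀ a : Fin (t+1), Fin ((Fin.cons n₀ ns' : Fin (t+1) → ℕ) a) → G) := by
        intro z
        funext a
        refine Fin.cases rfl (fun a => rfl) a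
      rw [hrow y, hrow y']
      have stepA : C (Fin.cons (evalW w₀ (y 0)) (fun a => evalW (w' a) (y a.succ)))
          = C (Fin.cons (evalW w₀ (y' 0)) (fun a => evalW (w' a) (y a.succ))) := by
        rcases hy 0 with h0 | ⟨g, hg, h, h', e, e'⟩
        · rw [h0]
        · have := hw₀inv g hg h h'
          rw [← e, ← e'] at this
          exact congrFun this (fun a => y a.succ)
      have stepB : C (Fin.cons (evalW w₀ (y' 0)) (fun a => evalW (w' a) (y a.succ)))
          = C (Fin.cons (evalW w₀ (y' 0)) (fun a => evalW (w' a) (y' a.succ))) := by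
        have := hw'inv (fun a => y a.succ) (fun a => y' a.succ) (fun a => hy a.succ)
        exact congrFun this (evalW w₀ (y' 0))
      exact stepA.trans stepB

/-- The inductive step: adding one more right coset. -/
private lemma goodL_cons (hH : UHJP (↥H) d) (L : List G) (hGL : GoodL H d L) (gp : G) :
    GoodL H d (gp :: L) := by
  intro κ _
  obtain ⟨M, hM⟩ := uhjp_kappa hH κ
  obtain ⟨ns, hns⟩ := rowLemma L hGL M κ
  refine ⟨Fintype.card (Σ k : Fin M, Fin (ns k)), fun c => ?_⟩
  set e := Fintype.equivFin (Σ k : Fin M, Fin (ns k)) with he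
  obtain ⟨w, hwu, hwinv⟩ := hns (fun ρ => c (fun j => ρ (e.symm j).1 (e.symm j).2))
  obtain ⟨V, hVu, hVinv⟩ := hM (fun z => c (fun j =>
    Sum.elim id (fun s : ↥H => (s : G) * (((z (e.symm j).1 : ↥H) : G) * gp))
      (w (e.symm j).1 (e.symm j).2)))
  set Wsig : (Σ k : Fin M, Fin (ns k)) → G ⊕ ↥H := fun p =>
    Sum.elim
      (fun b : ↥H => Sum.elim (Sum.inl : G → G ⊕ ↥H)
        (fun s : ↥H => Sum.inl ((s : G) * ((b : G) * gp))) (w p.1 p.2))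
      (fun t : ↥H => Sum.map id (fun s : ↥H => s * t) (w p.1 p.2))
      (V p.1) with hWsig
  -- the multiplicities of the row words
  choose m hm_pos hm_count using fun k => (hwu k).1
  -- a variable position of V
  obtain ⟨mV, hmV_pos, hmV_count⟩ := hVu.1
  have hVvar : ∃ k : Fin M, V k = Sum.inr 1 := by
    obtain ⟨k, hk⟩ := Finset.card_pos.mp (hmV_pos.trans_eq (hmV_count 1).symm)
    exact ⟨k, by simpa using hk⟩
  refine ⟨fun j => Wsig (e.symm j), ⟨?_, ?_⟩, ?_⟩
  · -- uniformity: each symbol occurs the same positive number of times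
    refine ⟨∑ k ∈ Finset.univ.filter (fun k => (V k).isRight = true), m k, ?_, ?_⟩
    · apply Finset.sum_pos
      · intro k _
        exact hm_pos k
      · obtain ⟨k, hk⟩ := hVvar
        exact ⟨k, by simp [hk]⟩
    · intro u
      refine Eq.trans (card_filter_equiv e.symm
        (q := fun p : Σ k : Fin M, Fin (ns k) => Wsig p = Sum.inr u)
        (instq := Classical.decPred _) (fun j => Iff.rfl)) ?_
      refine Eq.trans (card_filter_sigma
        (P := fun p : Σ k : Fin M, Fin (ns k) => Wsig p = Sum.inr u)
        (instP := Classical.decPred _)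
        (fun k => if (V k).isRight = true then m k else 0) (fun k => ?_)) ?_
      · beta_reduce
        rcases hVk : V k with b | t
        · rw [if_neg (by simp [hVk])]
          refine Eq.trans (card_filter_iff (q := fun _ => False)
            (instq := Classical.decPred _) (fun i => iff_false_intro ?_)) (by simp)
          rcases hwi : w k i with x | s <;> simp [hWsig, hVk, hwi]
        · rw [if_pos (by simp [hVk])]
          refine Eq.trans (card_filter_iff (fun i => ?_)) (hm_count k (u * t⁻¹))
          rcases hwi : w k i with x | s <;> simp [hWsig, hVk, hwi]
          exact eq_mul_inv_iff_mul_eq.symm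
      · exact (Finset.sum_filter _ _).symm
  · -- degree
    refine Eq.trans (card_filter_equiv e.symm
      (q := fun p : Σ k : Fin M, Fin (ns k) => (Wsig p).isRight = true)
      (instq := Classical.decPred _) (fun j => Iff.rfl)) ?_
    refine Eq.trans (card_filter_sigma
      (P := fun p : Σ k : Fin M, Fin (ns k) => (Wsig p).isRight = true)
      (instP := Classical.decPred _)
      (fun k => if (V k).isRight = true then d ^ L.length else 0) (fun k => ?_)) ?_
    · beta_reduce
      rcases hVk : V k with b | t
      · rw [if_neg (by simp [hVk])]
        refine Eq.trans (card_filter_iff (q := fun _ => False)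
          (instq := Classical.decPred _) (fun i => iff_false_intro ?_)) (by simp)
        rcases hwi : w k i with x | s <;> simp [hWsig, hVk, hwi]
      · rw [if_pos (by simp [hVk])]
        refine Eq.trans (card_filter_iff (fun i => ?_)) (hwu k).2
        rcases hwi : w k i with x | s <;> simp [hWsig, hVk, hwi]
    · have h1 : ∑ k : Fin M, (if (V k).isRight = true then d ^ L.length else 0)
          = (Finset.univ.filter fun k => (V k).isRight = true).card * d ^ L.length := by
        rw [← Finset.sum_filter, Finset.sum_const, smul_eq_mul]
      rw [h1, hVu.2, List.length_cons, pow_succ, mul_comm]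
  · -- invariance on all the cosets
    intro g hg h h'
    rcases List.mem_cons.mp hg with rfl | hgL
    · -- the new coset
      have key : ∀ h : ↥H,
          evalW (fun j => Wsig (e.symm j)) ((h : G) * g) = fun j =>
            Sum.elim id
              (fun s : ↥H => (s : G) * (((evalW V h (e.symm j).1 : ↥H) : G) * g))
              (w (e.symm j).1 (e.symm j).2) := by
        intro h
        funext j
        rcases hVk : V (e.symm j).1 with b | t <;>
          rcases hwi : w (e.symm j).1 (e.symm j).2 with x | s <;>
            simp [evalW, hWsig, hVk, hwi, subgroup_smul_def, subgroup_self_smul, mul_assoc]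
      calc c (evalW (fun j => Wsig (e.symm j)) ((h : G) * g))
          = c (fun j => Sum.elim id
              (fun s : ↥H => (s : G) * (((evalW V h (e.symm j).1 : ↥H) : G) * g))
              (w (e.symm j).1 (e.symm j).2)) := by rw [key h]
        _ = c (fun j => Sum.elim id
              (fun s : ↥H => (s : G) * (((evalW V h' (e.symm j).1 : ↥H) : G) * g))
              (w (e.symm j).1 (e.symm j).2)) := hVinv h h'
        _ = c (evalW (fun j => Wsig (e.symm j)) ((h' : G) * g)) := by rw [key h']
    · -- an old coset
      have key2 : ∀ h : ↥H,
          evalW (fun j => Wsig (e.symm j)) ((h : G) * g) = fun j =>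
            evalW (w (e.symm j).1)
              (Sum.elim (fun b : ↥H => (b : G) * gp)
                (fun t : ↥H => (t : G) * ((h : G) * g)) (V (e.symm j).1))
              (e.symm j).2 := by
        intro h
        funext j
        rcases hVk : V (e.symm j).1 with b | t <;>
          rcases hwi : w (e.symm j).1 (e.symm j).2 with x | s <;>
            simp [evalW, hWsig, hVk, hwi, subgroup_smul_def, subgroup_self_smul, mul_assoc]
      have hyp : ∀ k : Fin M,
          (Sum.elim (fun b : ↥H => (b : G) * gp)
              (fun t : ↥H => (t : G) * ((h : G) * g)) (V k))
            = (Sum.elim (fun b : ↥H => (b : G) * gp)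
              (fun t : ↥H => (t : G) * ((h' : G) * g)) (V k))
          ∨ ∃ g' ∈ L, ∃ h₀ h₀' : ↥H,
              (Sum.elim (fun b : ↥H => (b : G) * gp)
                (fun t : ↥H => (t : G) * ((h : G) * g)) (V k)) = (h₀ : G) * g'
              ∧ (Sum.elim (fun b : ↥H => (b : G) * gp)
                (fun t : ↥H => (t : G) * ((h' : G) * g)) (V k)) = (h₀' : G) * g' := by
        intro k
        rcases hVk : V k with b | t
        · left
          simp [hVk]
        · right
          exact ⟨g, hgL, t * h, t * h', by simp [hVk, mul_assoc], by simp [hVk, mul_assoc]⟩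
      have := hwinv
        (fun k => Sum.elim (fun b : ↥H => (b : G) * gp)
          (fun t : ↥H => (t : G) * ((h : G) * g)) (V k))
        (fun k => Sum.elim (fun b : ↥H => (b : G) * gp)
          (fun t : ↥H => (t : G) * ((h' : G) * g)) (V k))
        hyp
      calc c (evalW (fun j => Wsig (e.symm j)) ((h : G) * g))
          = c (fun j => evalW (w (e.symm j).1)
              (Sum.elim (fun b : ↥H => (b : G) * gp)
                (fun t : ↥H => (t : G) * ((h : G) * g)) (V (e.symm j).1))
              (e.symm j).2) := by rw [key2 h]
        _ = c (fun j => evalW (w (e.symm j).1)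
              (Sum.elim (fun b : ↥H => (b : G) * gp)
                (fun t : ↥H => (t : G) * ((h' : G) * g)) (V (e.symm j).1))
              (e.symm j).2) := this
        _ = c (evalW (fun j => Wsig (e.symm j)) ((h' : G) * g)) := by rw [key2 h']

/-- The pair property holds for every nonempty list of (representatives of) cosets. -/
private lemma goodL_of_ne_nil (hH : UHJP (↥H) d) :
    ∀ L : List G, L ≠ [] → GoodL H d L := by
  intro L
  induction L with
  | nil => intro h; exact absurd rfl h
  | cons g L ih =>
    intro _
    cases L with
    | nil => exact goodL_singleton hH g
    | cons g' L' => exact goodL_cons hH _ (ih (by simp)) g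

end Main

/-- If the subgroup `H` of `G` has the `d`-UHJP, then `(H, G)` has the `(E_{G|H}, d^p)`-UHJP,
where `p = [G : H]` and the classes of `E_{G|H}` are the right cosets `Hg` (the orbits of `H`
acting on `G` by left multiplication). -/
theorem coset_pairUHJP (G : Type*) [Group G] [Fintype G] (H : Subgroup G) (d : ℕ)
    (hH : UHJP (↥H) d) :
    PairUHJP (↥H) G (fun g g' => g' ∈ MulAction.orbit (↥H) g) (d ^ H.index) := by
  intro r
  letI : Fintype (G ⧸ H) := Fintype.ofFinite _
  -- a list of representatives of the right cosets of `H`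
  set L : List G := (Finset.univ : Finset (G ⧸ H)).toList.map (fun q => (Quotient.out q)⁻¹)
    with hL
  have hlen : L.length = H.index := by
    rw [hL, List.length_map, Finset.length_toList, Finset.card_univ,
      Subgroup.index_eq_card, Nat.card_eq_fintype_card]
    rfl
  have hne : L ≠ [] := by
    have h0 : 0 < L.length := by
      rw [hlen, Subgroup.index_eq_card, Nat.card_eq_fintype_card]
      exact Fintype.card_pos
    exact List.ne_nil_of_length_pos h0
  have hcover : ∀ x : G, ∃ g ∈ L, ∃ h : ↥H, x = (h : G) * g := by
    intro x
    refine ⟨((QuotientGroup.mk x⁻¹ : G ⧸ H)).out⁻¹, ?_, ?_⟩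
    · rw [hL]
      exact List.mem_map_of_mem (by simp)
    · have h1 : (QuotientGroup.mk ((QuotientGroup.mk x⁻¹ : G ⧸ H)).out : G ⧸ H)
          = QuotientGroup.mk x⁻¹ := QuotientGroup.out_eq' _
      rw [QuotientGroup.eq] at h1
      refine ⟨(⟨_, h1⟩ : ↥H)⁻¹, ?_⟩
      simp [mul_assoc]
  obtain ⟨N, hN⟩ := goodL_of_ne_nil hH L hne (ULift (Fin r))
  refine ⟨N, fun c => ?_⟩
  obtain ⟨w, hwu, hwinv⟩ := hN (fun v => ULift.up (c v))
  rw [hlen] at hwu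
  refine ⟨w, hwu, ?_⟩
  rintro x x' ⟨η, rfl⟩
  obtain ⟨g, hg, h, rfl⟩ := hcover x
  have key : η • ((h : G) * g) = ((η * h : ↥H) : G) * g := by
    simp [subgroup_smul_def, mul_assoc]
  rw [show (fun m : ↥H => m • ((h : G) * g)) η = ((η * h : ↥H) : G) * g from key]
  exact congrArg ULift.down (hwinv g hg h (η * h))
end

section
/- Let H, G, K be finite groups and π : G → K a surjective group homomorphism with kernel H. Suppose (H,G) has the (E_{G|H}, d₁)-UHJP, where E_{G|H} is the relation g E g′ iff π(g) = π(g′), and suppose K has the d_K-UHJP. Then G has the (d₁·d_K)-UHJP. -/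
/-!
Iterating the `(E_{G|H}, d₁)`-property block by block (a product argument) yields, for every `M`,
a word `W` whose variables `v_(i,h)`, `i < M`, `h ∈ H`, each occur `m₀ = d₁ / |H|` times, and whose
colour does not change when the element `xᵢ` substituted into block `i` is replaced by another
element of the same coset of `H`. Colour `K^M` by `κ ↦ c(W(σ κ))` for a section `σ` of `π`, and
take a `K`-word `u` for it. Substituting `h σ(k)` for `v_(i,h)` when `uᵢ` is the letter `k`, and the
variable `v_(h σ(k))` when `uᵢ = v_k`, gives a `G`-word `w`. Since `(k, h) ↦ h σ(k)` is a bijection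
`K × H → G`, every variable of `w` occurs `m_K m₀` times; and `w(g)` agrees with `W` at
`xᵢ ≡ σ(u(π g)ᵢ)` modulo `H`, so its colour depends only on the monochromatic `u(π g)`.
-/

open Finset Sum Function

def substW {X T : Type*} {N : ℕ} (W : Fin N → X ⊕ T) (f : T → X) : Fin N → X :=
  fun j => (W j).elim id f

def bindW {X T S : Type*} {N : ℕ} (W : Fin N → X ⊕ T) (φ : T → X ⊕ S) : Fin N → X ⊕ S :=
  fun j => (W j).elim inl φ

section Counting

variable {X S T : Type*} [DecidableEq X] [DecidableEq S] {N : ℕ}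

theorem card_filter_isRight_eq_sum [Fintype S] (w : Fin N → X ⊕ S) :
    #{i | (w i).isRight} = ∑ s, #{i | w i = inr s} := by
  rw [← card_biUnion]
  · congr 1
    ext i
    simp only [mem_filter, mem_univ, true_and, mem_biUnion]
    cases w i <;> simp
  · intro s _ s' _ hss'
    simp only [onFun, disjoint_left, mem_filter, mem_univ, true_and]
    rintro i hs hs'
    exact hss' (inr_injective (hs.symm.trans hs'))

theorem isUnifWord_iff_exists_count [Fintype S] (w : Fin N → X ⊕ S) (d : ℕ) :
    IsUnifWord w d ↔
      ∃ m, 0 < m ∧ (∀ s, #{i | w i = inr s} = m) ∧ m * Nat.card S = d := by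
  have hdef : IsUnifWord w d ↔
      (∃ m, 0 < m ∧ ∀ s, #{i | w i = inr s} = m) ∧ #{i | (w i).isRight} = d := by
    unfold IsUnifWord
    convert Iff.rfl
  rw [hdef, card_filter_isRight_eq_sum]
  constructor
  · rintro ⟨⟨m, hm, hcount⟩, rfl⟩
    exact ⟨m, hm, hcount, by simp [hcount, mul_comm]⟩
  · rintro ⟨m, hm, hcount, rfl⟩
    exact ⟨⟨m, hm, hcount⟩, by simp [hcount, mul_comm]⟩

theorem card_filter_append_eq_inr {N₁ N₂ : ℕ} (a : Fin N₁ → X ⊕ T) (b : Fin N₂ → X ⊕ T)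
    [DecidableEq T] (t : T) :
    #{j | Fin.append a b j = inr t} = #{j | a j = inr t} + #{j | b j = inr t} := by
  simp only [card_filter, Fin.sum_univ_add, Fin.append_left, Fin.append_right]

theorem card_filter_map_eq_inr [DecidableEq T] {T' : Type*} [DecidableEq T'] {e : T → T'}
    (he : e.Injective) (w : Fin N → X ⊕ T) (t : T) :
    #{j | (w j).map id e = inr (e t)} = #{j | w j = inr t} := by
  congr 1
  ext j
  simp only [mem_filter, mem_univ, true_and]
  cases w j <;> simp [he.eq_iff]

theorem card_filter_map_eq_inr_eq_zero {T' : Type*} [DecidableEq T'] {e : T → T'} {t' : T'}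
    (ht' : ∀ t, e t ≠ t') (w : Fin N → X ⊕ T) :
    #{j | (w j).map id e = inr t'} = 0 := by
  rw [card_eq_zero, filter_eq_empty_iff]
  intro j _
  cases w j <;> simp [ht']

theorem card_filter_bindW_eq_inr [DecidableEq T] [Fintype T] {m : ℕ} (W : Fin N → X ⊕ T)
    (φ : T → X ⊕ S) (hW : ∀ t, #{j | W j = inr t} = m) (s : S) :
    #{j | bindW W φ j = inr s} = #{t | φ t = inr s} * m := by
  have hfib : ({j | bindW W φ j = inr s} : Finset (Fin N)) =
      ({t | φ t = inr s} : Finset T).biUnion fun t => {j | W j = inr t} := by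
    ext j
    simp only [mem_filter, mem_univ, true_and, mem_biUnion]
    simp only [bindW]
    cases W j <;> simp
  rw [hfib, card_biUnion, sum_congr rfl fun t _ => hW t, sum_const, smul_eq_mul]
  intro t _ t' _ htt'
  simp only [onFun, disjoint_left, mem_filter, mem_univ, true_and]
  rintro j ht ht'
  exact htt' (inr_injective (ht.symm.trans ht'))

end Counting

section Substitution

variable {X T T' S : Type*} {N : ℕ}

theorem substW_append {N₁ N₂ : ℕ} (a : Fin N₁ → X ⊕ T) (b : Fin N₂ → X ⊕ T) (f : T → X) :
    substW (Fin.append a b) f = Fin.append (substW a f) (substW b f) := by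
  ext j
  refine Fin.addCases (fun i => ?_) (fun i => ?_) j <;> simp [substW]

theorem substW_map (w : Fin N → X ⊕ T) (e : T → T') (f : T' → X) :
    substW (fun j => (w j).map id e) f = substW w (f ∘ e) := by
  ext j
  simp only [substW]
  cases w j <;> rfl

theorem substW_bindW (W : Fin N → X ⊕ T) (φ : T → X ⊕ S) (f : S → X) :
    substW (bindW W φ) f = substW W fun t => (φ t).elim id f := by
  ext j
  simp only [substW, bindW]
  cases W j <;> rfl

end Substitution

section Blocks

variable {X S : Type*} {N₁ N₂ M : ℕ}

def consBlock (w : Fin N₁ → X ⊕ S) (W : Fin N₂ → X ⊕ (Fin M × S)) :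
    Fin (N₁ + N₂) → X ⊕ (Fin (M + 1) × S) :=
  Fin.append (fun j => (w j).map id ((0 : Fin (M + 1)), ·))
    (fun j => (W j).map id fun v => (v.1.succ, v.2))

theorem card_filter_consBlock_eq_inr [DecidableEq X] [DecidableEq S] {w : Fin N₁ → X ⊕ S}
    {W : Fin N₂ → X ⊕ (Fin M × S)} {m : ℕ} (hw : ∀ s, #{j | w j = inr s} = m)
    (hW : ∀ v, #{j | W j = inr v} = m) (v : Fin (M + 1) × S) :
    #{j | consBlock w W j = inr v} = m := by
  obtain ⟨i, s⟩ := v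
  rw [consBlock, card_filter_append_eq_inr]
  induction i using Fin.cases with
  | zero =>
    rw [card_filter_map_eq_inr (Prod.mk_right_injective 0), hw,
      card_filter_map_eq_inr_eq_zero fun v h => Fin.succ_ne_zero _ (congrArg Prod.fst h),
      add_zero]
  | succ i =>
    rw [card_filter_map_eq_inr_eq_zero fun v h => Fin.succ_ne_zero i (congrArg Prod.fst h).symm,
      zero_add]
    exact (card_filter_map_eq_inr ((Fin.succ_injective _).prodMap injective_id) W (i, s)).trans
      (hW (i, s))

theorem substW_consBlock [SMul S X] (w : Fin N₁ → X ⊕ S) (W : Fin N₂ → X ⊕ (Fin M × S))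
    (y : Fin (M + 1) → X) : substW (consBlock w W) (fun v => v.2 • y v.1) =
      Fin.append (evalW w (y 0)) (substW W fun v => v.2 • y v.1.succ) := by
  rw [consBlock, substW_append, substW_map, substW_map]
  rfl

end Blocks

namespace PairUHJP

variable {S X : Type*} [SMul S X] {E : X → X → Prop} {d : ℕ}

theorem exists_word_of_finite (h : PairUHJP S X E d) (C : Type*) [Finite C] :
    ∃ N, ∀ c : (Fin N → X) → C, ∃ w : Fin N → X ⊕ S, IsUnifWord w d ∧
      ∀ x x', E x x' → c (evalW w x) = c (evalW w x') := by
  obtain ⟨r, ⟨e⟩⟩ := Finite.exists_equiv_fin C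
  obtain ⟨N, hN⟩ := h r
  refine ⟨N, fun c => ?_⟩
  obtain ⟨w, hw, hc⟩ := hN (e ∘ c)
  exact ⟨w, hw, fun x x' hx => e.injective (hc x x' hx)⟩

theorem exists_pos_mul_card_eq [Fintype S] (h : PairUHJP S X E d) :
    ∃ m, 0 < m ∧ m * Nat.card S = d := by
  classical
  obtain ⟨N, hN⟩ := h 1
  obtain ⟨w, hw, -⟩ := hN fun _ => 0
  obtain ⟨m, hm, -, hmd⟩ := (isUnifWord_iff_exists_count w d).1 hw
  exact ⟨m, hm, hmd⟩

theorem exists_blockWord [Fintype S] [Nonempty S] [Finite X] [DecidableEq X] [DecidableEq S]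
    {m : ℕ} (h : PairUHJP S X E d) (hm : m * Nat.card S = d) (M r : ℕ) :
    ∃ N, ∀ c : (Fin N → X) → Fin r, ∃ W : Fin N → X ⊕ (Fin M × S),
      (∀ v, #{j | W j = inr v} = m) ∧
      ∀ x x' : Fin M → X, (∀ i, E (x i) (x' i)) →
        c (substW W fun v => v.2 • x v.1) = c (substW W fun v => v.2 • x' v.1) := by
  induction M generalizing r with
  | zero =>
    exact ⟨0, fun c => ⟨Fin.elim0, fun v => v.1.elim0,
      fun x x' _ => congrArg c (Subsingleton.elim _ _)⟩⟩
  | succ M ih =>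
    -- colour the first `N₁` coordinates by the colouring they induce on the last `N'`
    obtain ⟨N', hN'⟩ := ih (Nat.card (X → Fin r))
    obtain ⟨N₁, hN₁⟩ := h.exists_word_of_finite ((Fin N' → X) → Fin r)
    refine ⟨N₁ + N', fun c => ?_⟩
    obtain ⟨w₁, hw₁, hc₁⟩ := hN₁ fun a b => c (Fin.append a b)
    obtain ⟨m₁, -, hcount₁, hm₁⟩ := (isUnifWord_iff_exists_count w₁ d).1 hw₁
    obtain rfl : m₁ = m := Nat.eq_of_mul_eq_mul_right Nat.card_pos (hm₁.trans hm.symm)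
    let e := Finite.equivFin (X → Fin r)
    obtain ⟨W', hcount', hc'⟩ := hN' fun b => e fun a => c (Fin.append (evalW w₁ a) b)
    refine ⟨consBlock w₁ W', card_filter_consBlock_eq_inr hcount₁ hcount', fun x x' hx => ?_⟩
    rw [substW_consBlock, substW_consBlock]
    calc _ = c (Fin.append (evalW w₁ (x 0)) (substW W' fun v => v.2 • x' v.1.succ)) :=
          congrFun (e.injective (hc' _ _ fun i => hx i.succ)) (x 0)
      _ = _ := congrFun (hc₁ _ _ (hx 0)) _

end PairUHJP

section Extension

variable {G K : Type*} [Group G] [Group K] {π : G →* K} (hsurj : Surjective π)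

noncomputable def liftWord {M : ℕ} (u : Fin M → K ⊕ K) : Fin M → G ⊕ G :=
  fun i => (u i).map (surjInv hsurj) (surjInv hsurj)

noncomputable def liftVar {M : ℕ} (u : Fin M → K ⊕ K) (v : Fin M × π.ker) : G ⊕ G :=
  (liftWord hsurj u v.1).map (v.2 * ·) (v.2 * ·)

theorem mul_surjInv_eq_iff_of_mem_ker {h : G} (hh : h ∈ π.ker) (k : K) (g : G) :
    h * surjInv hsurj k = g ↔ k = π g ∧ h = g * (surjInv hsurj (π g))⁻¹ := by
  constructor
  · rintro rfl
    have hk : π (h * surjInv hsurj k) = k := by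
      rw [map_mul, hh, one_mul, surjInv_eq hsurj]
    rw [hk, mul_inv_cancel_right]
    exact ⟨rfl, rfl⟩
  · rintro ⟨rfl, rfl⟩
    exact inv_mul_cancel_right _ _

theorem card_filter_liftVar_eq_inr [DecidableEq G] [DecidableEq K] [Fintype π.ker] {M : ℕ}
    (u : Fin M → K ⊕ K) (g : G) :
    #{v | liftVar hsurj u v = inr g} = #{i | u i = inr (π g)} := by
  have hmem : g * (surjInv hsurj (π g))⁻¹ ∈ π.ker := by
    rw [MonoidHom.mem_ker, map_mul, map_inv, surjInv_eq hsurj, mul_inv_cancel]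
  have hfib : ({v | liftVar hsurj u v = inr g} : Finset (Fin M × π.ker)) =
      ({i | u i = inr (π g)} : Finset (Fin M)) ×ˢ ({⟨_, hmem⟩} : Finset π.ker) := by
    ext ⟨i, h⟩
    simp only [mem_filter, mem_univ, true_and, mem_product, mem_singleton]
    simp only [liftVar, liftWord]
    cases u i <;> simp [mul_surjInv_eq_iff_of_mem_ker hsurj h.2, Subtype.ext_iff]
  rw [hfib, card_product, card_singleton, mul_one]

theorem evalW_bindW_liftVar {N M : ℕ} (W : Fin N → G ⊕ (Fin M × π.ker)) (u : Fin M → K ⊕ K)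
    (g : G) : evalW (bindW W (liftVar hsurj u)) g =
      substW W fun v => v.2 • evalW (liftWord hsurj u) g v.1 := by
  refine (substW_bindW _ _ _).trans (congrArg _ (funext fun v => ?_))
  simp only [liftVar, evalW]
  cases liftWord hsurj u v.1 <;> simp [Subgroup.smul_def, mul_assoc]

theorem map_evalW_liftWord {M : ℕ} (u : Fin M → K ⊕ K) (g : G) (i : Fin M) :
    π (evalW (liftWord hsurj u) g i) = evalW u (π g) i := by
  simp only [evalW, liftWord]
  cases u i <;> simp [surjInv_eq hsurj]

end Extension

theorem MonoidHom.card_eq_card_ker_mul_card_of_surjective {G K : Type*} [Group G] [Group K]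
    {π : G →* K} (hsurj : Surjective π) : Nat.card G = Nat.card π.ker * Nat.card K := by
  rw [← π.ker.card_mul_index, Subgroup.index_ker, π.range_eq_top.2 hsurj, Subgroup.card_top]

/-- If `π : G → K` is a surjective homomorphism with kernel `H`, `(H, G)` has the
`(E_{G|H}, d₁)`-UHJP (where `g E g' ↔ π g = π g'`) and `K` has the `d_K`-UHJP, then `G` has the
`(d₁·d_K)`-UHJP. -/
theorem extension_step (G K : Type*) [Group G] [Fintype G] [Group K] [Fintype K]
    (π : G →* K) (hsurj : Function.Surjective π)
    (H : Subgroup G) (hker : π.ker = H)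
    (d₁ dK : ℕ)
    (h1 : PairUHJP (↥H) G (fun g g' => π g = π g') d₁)
    (h2 : UHJP K dK) :
    UHJP G (d₁ * dK) := by
  classical
  subst hker
  obtain ⟨m₀, hm₀, hm₀ker⟩ := h1.exists_pos_mul_card_eq
  intro r
  obtain ⟨M, hM⟩ := h2 r
  obtain ⟨N, hN⟩ := h1.exists_blockWord hm₀ker M r
  refine ⟨N, fun c => ?_⟩
  obtain ⟨W, hWcount, hWc⟩ := hN c
  obtain ⟨u, hu, huc⟩ := hM fun κ => c (substW W fun v => v.2 • surjInv hsurj (κ v.1))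
  obtain ⟨mK, hmK, hucount, hmKK⟩ := (isUnifWord_iff_exists_count u dK).1 hu
  have hcolor (g : G) : c (evalW (bindW W (liftVar hsurj u)) g) =
      c (substW W fun v => v.2 • surjInv hsurj (evalW u (π g) v.1)) := by
    rw [evalW_bindW_liftVar]
    refine hWc (evalW (liftWord hsurj u) g) (surjInv hsurj ∘ evalW u (π g)) fun i => ?_
    rw [map_evalW_liftWord, comp_apply, surjInv_eq hsurj]
  refine ⟨bindW W (liftVar hsurj u), (isUnifWord_iff_exists_count _ _).2
      ⟨mK * m₀, by positivity, fun g => ?_, ?_⟩,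
    fun g g' => (hcolor g).trans ((huc _ _).trans (hcolor g').symm)⟩
  · rw [card_filter_bindW_eq_inr W _ hWcount, card_filter_liftVar_eq_inr, hucount]
  · rw [MonoidHom.card_eq_card_ker_mul_card_of_surjective hsurj, ← hm₀ker, ← hmKK]
    ring
end

section
/- Let H and K be finite groups and let G be an extension of K by H (i.e., there is a surjective homomorphism π : G → K and an injective homomorphism ι : H → G with image ι(H) = ker π). If H has the d_H-UHJP and K has the d_K-UHJP, then G has the d-UHJP, where d = d_H^{|K|} · d_K. -/
/-! ### Auxiliary counting lemmas -/

section Counting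

open Finset
open scoped Classical

/-- transporting a filter-count along an equivalence -/
lemma card_filter_comp_equiv {α β : Type*} [Fintype α] [Fintype β] (e : α ≃ β) (p : β → Prop) :
    ((Finset.univ : Finset α).filter fun a => p (e a)).card
      = ((Finset.univ : Finset β).filter p).card := by
  refine Finset.card_bij (fun a _ => e a) ?_ ?_ ?_
  · intro a ha
    simp only [mem_filter, mem_univ, true_and] at ha ⊢
    exact ha
  · intro a _ b _ h
    exact e.injective h
  · intro b hb
    simp only [mem_filter, mem_univ, true_and] at hb ⊢
    exact ⟨e.symm b, by simpa using hb, by simp⟩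

lemma card_filter_curry {α β : Type*} [Fintype α] [Fintype β] (P : α → β → Prop) :
    ((Finset.univ : Finset (α × β)).filter fun x => P x.1 x.2).card
      = ∑ a : α, ((Finset.univ : Finset β).filter fun b => P a b).card := by
  classical
  rw [← Fintype.card_subtype]
  have e : {x : α × β // P x.1 x.2} ≃ Σ a : α, {b : β // P a b} :=
    { toFun := fun x => ⟨x.1.1, ⟨x.1.2, x.2⟩⟩
      invFun := fun x => ⟨(x.1, x.2.1), x.2.2⟩
      left_inv := fun x => rfl
      right_inv := fun x => rfl }
  rw [Fintype.card_congr e, Fintype.card_sigma]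
  exact Finset.sum_congr rfl (fun a _ => Fintype.card_subtype _)

lemma card_isRight_eq_sum {α S X : Type*} [Fintype α] [Fintype S] [Nonempty S]
    (w : α → X ⊕ S) :
    ((Finset.univ : Finset α).filter fun a => (w a).isRight).card
      = ∑ s : S, ((Finset.univ : Finset α).filter fun a => w a = Sum.inr s).card := by
  classical
  have hs : Nonempty S := inferInstance
  set lab : α → S := fun a => Sum.elim (fun _ => hs.some) id (w a) with hlab
  rw [Finset.card_eq_sum_card_fiberwise
    (f := lab) (t := Finset.univ) (fun x _ => Finset.mem_univ _)]
  refine Finset.sum_congr rfl (fun s _ => ?_)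
  congr 1
  ext a
  simp only [Finset.mem_filter, Finset.mem_univ, true_and, Finset.filter_filter]
  rcases hx : w a with y | s'
  · simp [hlab, hx]
  · simp [hlab, hx]

/-- comparing filter cardinalities for definitionally/propositionally equivalent predicates,
ignoring decidability instances. -/
lemma cardf_congr {α : Type*} [Fintype α] {p q : α → Prop} {ip : DecidablePred p}
    {iq : DecidablePred q} (h : ∀ a, p a ↔ q a) :
    (@Finset.filter _ p ip Finset.univ).card = (@Finset.filter _ q iq Finset.univ).card := by
  refine Finset.card_bij (fun a _ => a) ?_ ?_ ?_
  · intro a ha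
    simp only [Finset.mem_filter, Finset.mem_univ, true_and] at ha ⊢
    exact (h a).mp ha
  · intro a _ b _ hab; exact hab
  · intro b hb
    simp only [Finset.mem_filter, Finset.mem_univ, true_and] at hb ⊢
    exact ⟨b, (h b).mpr hb, rfl⟩

/-- From a uniform word we get `d = m * |S|`. -/
lemma IsUnifWord.deg_eq {S X : Type*} [Fintype S] [Nonempty S] {N d : ℕ}
    {w : Fin N → X ⊕ S} (hw : IsUnifWord w d) :
    ∃ m : ℕ, 0 < m ∧ (∀ s : S,
      (Finset.univ.filter (fun i => w i = Sum.inr s)).card = m) ∧ d = m * Fintype.card S := by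
  obtain ⟨⟨m, hm, hms⟩, hd⟩ := hw
  refine ⟨m, hm, hms, ?_⟩
  rw [← hd, card_isRight_eq_sum w]
  simp only [hms, Finset.sum_const, Finset.card_univ, smul_eq_mul, mul_comm]

end Counting

/-! ### The extension machinery -/

section Ext

open scoped Classical

variable {H G K : Type*} [Group H] [Fintype H] [Group G] [Fintype G] [Group K] [Fintype K]

/-- Evaluation of an `H`-variable word over `G` (letters in `G`, variables in `H`,
`v_h` evaluated at `x` gives `ι h * x`). -/
def evalE (ι : H →* G) {α : Type*} (v : α → G ⊕ H) (x : G) : α → G :=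
  fun j => Sum.elim id (fun h => ι h * x) (v j)

/-- Padding a word with letters `1` up to a larger length. -/
def padW {N : ℕ} (N' : ℕ) (v : Fin N → G ⊕ H) : Fin N' → G ⊕ H :=
  fun j => if h : (j : ℕ) < N then v ⟨j, h⟩ else Sum.inl 1

/-- Extending a tuple by `1`'s. -/
def extG {N : ℕ} (N' : ℕ) (f : Fin N → G) : Fin N' → G :=
  fun j => if h : (j : ℕ) < N then f ⟨j, h⟩ else 1

lemma evalE_padW (ι : H →* G) {N N' : ℕ} (v : Fin N → G ⊕ H) (x : G) :
    evalE ι (padW N' v) x = extG N' (evalE ι v x) := by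
  funext j
  by_cases h : (j : ℕ) < N
  · simp [evalE, padW, extG, h]
  · simp [evalE, padW, extG, h]

lemma isUnifWord_padW {N N' : ℕ} (hNN : N ≤ N') {v : Fin N → G ⊕ H} {D : ℕ}
    (hv : IsUnifWord v D) : IsUnifWord (padW N' v) D := by
  classical
  have key : ∀ p : G ⊕ H → Prop, (¬ p (Sum.inl 1)) →
      (Finset.univ.filter (fun j : Fin N' => p (padW N' v j))).card
        = (Finset.univ.filter (fun i : Fin N => p (v i))).card := by
    intro p hp
    refine Finset.card_bij' (fun j hj => ?_) (fun i _ => ⟨(i : ℕ), lt_of_lt_of_le i.2 hNN⟩)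
      ?_ ?_ ?_ ?_
    · -- map forward
      refine ⟨(j : ℕ), ?_⟩
      by_contra hc
      simp only [Finset.mem_filter, Finset.mem_univ, true_and, padW, dif_neg hc] at hj
      exact hp (by simpa [hc] using (Finset.mem_filter.mp hj).2)
    · intro j hj
      simp only [Finset.mem_filter, Finset.mem_univ, true_and] at hj ⊢
      by_cases h : (j : ℕ) < N
      · simp only [padW, dif_pos h] at hj
        convert hj
      · exact absurd (by simpa [padW, dif_neg h] using hj) hp
    · intro i hi
      simp only [Finset.mem_filter, Finset.mem_univ, true_and] at hi ⊢
      simpa [padW] using hi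
    · intro j hj; ext; simp
    · intro i hi; ext; simp
  obtain ⟨⟨m, hm, hms⟩, hd⟩ := hv
  refine ⟨⟨m, hm, fun s => ?_⟩, ?_⟩
  · have h2 : (Finset.univ.filter (fun i : Fin N' => padW N' v i = Sum.inr s)).card
        = (Finset.univ.filter (fun i : Fin N => v i = Sum.inr s)).card := by
      have h := key (fun z => z = Sum.inr s) (by simp)
      convert h using 2 <;> (ext x; simp)
    rw [h2]; exact hms s
  · have h2 : (Finset.univ.filter (fun i : Fin N' => (padW N' v i).isRight = true)).card
        = (Finset.univ.filter (fun i : Fin N => (v i).isRight = true)).card := by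
      have h := key (fun z => z.isRight = true) (by simp)
      convert h using 2 <;> (ext x; simp)
    rw [h2]; exact hd

/-- the "stage" property: there are uniform `H`-variable words over `G` of degree `D`
collapsing colorings along the relation `E`. -/
def AStage (ι : H →* G) (E : G → G → Prop) (D : ℕ) : Prop :=
  ∀ r : ℕ, ∃ N : ℕ, ∀ c : (Fin N → G) → Fin r,
    ∃ v : Fin N → G ⊕ H, IsUnifWord v D ∧
      ∀ x x' : G, E x x' → c (evalE ι v x) = c (evalE ι v x')

end Ext

section Core

open scoped Classical

variable {H G K : Type*} [Group H] [Fintype H] [Group G] [Fintype G] [Group K] [Fintype K]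

/-- The multi-slot decoupled collapse: given the one-slot stage property for a relation `E`,
for any number `M` of parallel slots there is a common length `NN` and, for any coloring of
the `M`-slot grids, per-slot uniform words such that the color is invariant under changing
the slot evaluation points one fiber of `E` at a time (simultaneously formulated). -/
lemma core (ι : H →* G) {E : G → G → Prop} {D : ℕ} (hA : AStage ι E D) :
    ∀ M r : ℕ, ∃ NN : ℕ, ∀ c : (Fin M → Fin NN → G) → Fin r,
      ∃ vs : Fin M → Fin NN → G ⊕ H,
        (∀ m, IsUnifWord (vs m) D) ∧
        ∀ pts pts' : Fin M → G,
          (∀ m, pts m = pts' m ∨ E (pts m) (pts' m)) →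
          c (fun m => evalE ι (vs m) (pts m)) = c (fun m => evalE ι (vs m) (pts' m)) := by
  intro M
  induction M with
  | zero =>
      intro r
      refine ⟨0, fun c => ⟨fun m => m.elim0, fun m => m.elim0, fun pts pts' _ => ?_⟩⟩
      exact congrArg c (funext fun m => m.elim0)
  | succ M ih =>
      intro r
      -- number of colors for the new slot's word
      obtain ⟨N0, hN0⟩ := hA (Fintype.card ((Fin (M + 1) → G) → Fin r))
      -- the rest of the slots, with function-valued colors
      obtain ⟨NR, hNR⟩ := ih (Fintype.card ((Fin N0 → G) → Fin r))
      refine ⟨max N0 NR, ?_⟩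
      intro c
      -- gluing
      set glue : (Fin (max N0 NR) → G) → (Fin M → Fin (max N0 NR) → G) →
          (Fin (M + 1) → Fin (max N0 NR) → G) := fun z Z => Fin.cases z Z with hglue
      set eR := Fintype.equivFin ((Fin N0 → G) → Fin r)
      set cR : (Fin M → Fin NR → G) → Fin (Fintype.card ((Fin N0 → G) → Fin r)) :=
        fun Z => eR (fun z0 => c (glue (extG (max N0 NR) z0) (fun m => extG (max N0 NR) (Z m))))
        with hcR
      obtain ⟨vsR, hstatsR, hinvR⟩ := hNR cR
      set e0 := Fintype.equivFin ((Fin (M + 1) → G) → Fin r)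
      set c0 : (Fin N0 → G) → Fin (Fintype.card ((Fin (M + 1) → G) → Fin r)) :=
        fun z => e0 (fun pp => c (glue (extG (max N0 NR) z)
          (fun m => extG (max N0 NR) (evalE ι (vsR m) (pp m.succ))))) with hc0
      obtain ⟨v0, hstat0, hinv0⟩ := hN0 c0
      refine ⟨Fin.cases (padW (max N0 NR) v0) (fun m => padW (max N0 NR) (vsR m)), ?_, ?_⟩
      · intro m
        induction m using Fin.cases with
        | zero => exact isUnifWord_padW (le_max_left _ _) hstat0
        | succ m => exact isUnifWord_padW (le_max_right _ _) (hstatsR m)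
      · intro pts pts' hpp
        -- the configuration decomposes through `glue`
        have hconf : ∀ q : Fin (M + 1) → G,
            (fun m => evalE ι
              ((Fin.cases (padW (max N0 NR) v0) (fun m => padW (max N0 NR) (vsR m)) :
                ∀ _ : Fin (M+1), Fin (max N0 NR) → G ⊕ H) m) (q m))
            = glue (extG (max N0 NR) (evalE ι v0 (q 0)))
                (fun m => extG (max N0 NR) (evalE ι (vsR m) (q m.succ))) := by
          intro q
          funext m
          induction m using Fin.cases with
          | zero => simpa [hglue] using evalE_padW ι v0 (q 0)
          | succ m => simpa [hglue] using evalE_padW ι (vsR m) (q m.succ)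
        rw [hconf pts, hconf pts']
        -- step A : change slot 0
        have stepA : c (glue (extG (max N0 NR) (evalE ι v0 (pts 0)))
              (fun m => extG (max N0 NR) (evalE ι (vsR m) (pts m.succ))))
            = c (glue (extG (max N0 NR) (evalE ι v0 (pts' 0)))
              (fun m => extG (max N0 NR) (evalE ι (vsR m) (pts m.succ)))) := by
          rcases hpp 0 with h0 | h0
          · rw [h0]
          · have := hinv0 (pts 0) (pts' 0) h0
            have h2 := e0.injective (by simpa [hc0] using this)
            exact congrFun h2 pts
        -- step B : change the remaining slots
        have stepB : c (glue (extG (max N0 NR) (evalE ι v0 (pts' 0)))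
              (fun m => extG (max N0 NR) (evalE ι (vsR m) (pts m.succ))))
            = c (glue (extG (max N0 NR) (evalE ι v0 (pts' 0)))
              (fun m => extG (max N0 NR) (evalE ι (vsR m) (pts' m.succ)))) := by
          have := hinvR (fun m => pts m.succ) (fun m => pts' m.succ)
            (fun m => hpp m.succ)
          have h2 := eR.injective (by simpa [hcR] using this)
          exact congrFun h2 (evalE ι v0 (pts' 0))
        exact stepA.trans stepB

end Core

section PartA

open scoped Classical

variable {H G K : Type*} [Group H] [Fintype H] [Group G] [Fintype G] [Group K] [Fintype K]
variable (π : G →* K) (ι : H →* G)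

/-- the relation "same fiber, lying over a coset in `S`" -/
def EL (S : List K) : G → G → Prop := fun p p' => π p = π p' ∧ π p ∈ S

lemma pi_iota_mul (hrange : ι.range = π.ker) (h : H) (x : G) : π (ι h * x) = π x := by
  have : ι h ∈ π.ker := hrange ▸ ⟨h, rfl⟩
  rw [map_mul, MonoidHom.mem_ker.mp this, one_mul]

lemma repr_fiber (hπ : Function.Surjective π) (hrange : ι.range = π.ker)
    {p : G} {k : K} (hp : π p = k) : ∃ b : H, p = ι b * Function.surjInv hπ k := by
  have hker : p * (Function.surjInv hπ k)⁻¹ ∈ π.ker := by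
    rw [MonoidHom.mem_ker, map_mul, map_inv, Function.surjInv_eq hπ, hp, mul_inv_cancel]
  rw [← hrange] at hker
  obtain ⟨b, hb⟩ := hker
  exact ⟨b, by rw [hb, inv_mul_cancel_right]⟩

lemma ABase (hπ : Function.Surjective π) (hrange : ι.range = π.ker)
    {dH : ℕ} (h1 : UHJP H dH) (k₀ : K) : AStage ι (EL π [k₀]) dH := by
  intro r
  obtain ⟨n, hn⟩ := h1 r
  refine ⟨n, ?_⟩
  intro c
  set sk : G := Function.surjInv hπ k₀ with hsk
  set ct : (Fin n → H) → Fin r := fun y => c (fun i => ι (y i) * sk) with hct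
  obtain ⟨u, huU, huM⟩ := hn ct
  refine ⟨fun i => Sum.map (fun a => ι a * sk) id (u i), ?_, ?_⟩
  · obtain ⟨⟨m, hm, hms⟩, hd⟩ := huU
    constructor
    · refine ⟨m, hm, fun s => ?_⟩
      rw [← hms s]
      congr 1
      ext i
      rcases hui : u i with a | h <;> simp [hui]
    · rw [← hd]
      congr 1
      ext i
      rcases hui : u i with a | h <;> simp [hui]
  · rintro p p' ⟨hpp, hp⟩
    rw [List.mem_singleton] at hp
    have hp' : π p' = k₀ := hpp ▸ hp
    obtain ⟨b, hb⟩ := repr_fiber π ι hπ hrange hp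
    obtain ⟨b', hb'⟩ := repr_fiber π ι hπ hrange hp'
    have key : ∀ q : G, ∀ bq : H, q = ι bq * sk →
        evalE ι (fun i => Sum.map (fun a => ι a * sk) id (u i)) q
          = fun i => ι ((evalW u bq) i) * sk := by
      intro q bq hq
      funext i
      rcases hui : u i with a | h
      · simp [evalE, evalW, hui]
      · simp only [evalE, evalW, hui, Sum.map_inr, Sum.elim_inr, id_eq]
        rw [hq, smul_eq_mul, map_mul, mul_assoc]
    rw [key p b hb, key p' b' hb']
    exact huM b b'

/-- the per-slot point of the step construction -/
noncomputable def PTA (hπ : Function.Surjective π) (ι : H →* G) (k₀ : K) (s : H ⊕ H) (x : G) : G :=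
  Sum.elim (fun a => ι a * Function.surjInv hπ k₀) (fun h₁ => ι h₁ * x) s

lemma AStep (hπ : Function.Surjective π) (hrange : ι.range = π.ker)
    {dH D : ℕ} (h1 : UHJP H dH) {S : List K} (hS : AStage ι (EL π S) D) (k₀ : K) :
    AStage ι (EL π (k₀ :: S)) (dH * D) := by
  intro r
  obtain ⟨n1, hn1⟩ := h1 r
  obtain ⟨NI, hcore⟩ := core ι hS n1 r
  set sk : G := Function.surjInv hπ k₀ with hsk
  refine ⟨Fintype.card (Fin n1 × Fin NI), ?_⟩
  intro c
  set e := Fintype.equivFin (Fin n1 × Fin NI)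
  set cGrid : (Fin n1 → Fin NI → G) → Fin r :=
    fun f => c (fun idx => f (e.symm idx).1 (e.symm idx).2) with hcGrid
  obtain ⟨vs, hstats, hinv⟩ := hcore cGrid
  set ct : (Fin n1 → H) → Fin r :=
    fun y => cGrid (fun i => evalE ι (vs i) (ι (y i) * sk)) with hct
  obtain ⟨u, huU, huM⟩ := hn1 ct
  set vA : Fin n1 × Fin NI → G ⊕ H := fun p =>
    Sum.elim (fun a => Sum.inl (evalE ι (vs p.1) (ι a * sk) p.2))
      (fun h₁ => Sum.map id (fun h => h * h₁) (vs p.1 p.2)) (u p.1) with hvA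
  refine ⟨fun idx => vA (e.symm idx), ?_, ?_⟩
  · -- uniformity
    have hstats1 : ∀ i, ∃ m : ℕ, 0 < m ∧ ∀ s : H,
        (Finset.univ.filter (fun j => vs i j = Sum.inr s)).card = m := fun i => (hstats i).1
    choose mi hmipos hmi using hstats1
    obtain ⟨⟨mu, hmupos, hmus⟩, hdu⟩ := huU
    have htrans : ∀ p : G ⊕ H → Prop,
        (Finset.univ.filter (fun idx => p (vA (e.symm idx)))).card
          = ∑ i : Fin n1, (Finset.univ.filter (fun j => p (vA (i, j)))).card := by
      intro p
      have h1' := card_filter_comp_equiv e.symm (fun q : Fin n1 × Fin NI => p (vA q))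
      have h2' := card_filter_curry (fun (i : Fin n1) (j : Fin NI) => p (vA (i, j)))
      calc (Finset.univ.filter (fun idx => p (vA (e.symm idx)))).card
          = (Finset.univ.filter (fun q : Fin n1 × Fin NI => p (vA q))).card := by
            convert h1' using 2
        _ = ∑ i : Fin n1, (Finset.univ.filter (fun j => p (vA (i, j)))).card := by
            convert h2' using 2 <;> (try (ext x; simp))
    have hslot : ∀ (s : H) (i : Fin n1),
        (Finset.univ.filter (fun j => vA (i, j) = Sum.inr s)).card
          = if (u i).isRight = true then mi i else 0 := by
      intro s i
      rcases hui : u i with a | h₁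
      · rw [if_neg (by simp [hui])]
        rw [Finset.card_eq_zero, Finset.filter_eq_empty_iff]
        intro j _
        simp [hvA, hui]
      · rw [if_pos (by simp [hui])]
        rw [← hmi i (s * h₁⁻¹)]
        congr 1
        apply Finset.filter_congr
        intro j _
        rcases hvj : vs i j with x0 | h
        · simp [hvA, hui, hvj]
        · simp only [hvA, hui, hvj, Sum.elim_inr, Sum.map_inr, Sum.inr.injEq]
          rw [eq_mul_inv_iff_mul_eq]
    constructor
    · refine ⟨∑ i : Fin n1, (if (u i).isRight = true then mi i else 0), ?_, ?_⟩
      · have hmu1 : 0 < (Finset.univ.filter (fun i => u i = Sum.inr (1 : H))).card := by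
          rw [hmus 1]; exact hmupos
        obtain ⟨i0, hi0⟩ := Finset.card_pos.mp hmu1
        have hi0r : (u i0).isRight = true := by
          simp only [Finset.mem_filter] at hi0
          simp [hi0.2]
        refine Finset.sum_pos' (fun i _ => Nat.zero_le _) ⟨i0, Finset.mem_univ _, ?_⟩
        rw [if_pos hi0r]; exact hmipos i0
      · intro s
        exact Eq.trans (cardf_congr (fun a => Iff.rfl))
          ((htrans (fun z => z = Sum.inr s)).trans
          (Finset.sum_congr rfl (fun i _ =>
            Eq.trans (cardf_congr (fun a => Iff.rfl)) (hslot s i))))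
    · have hslotd : ∀ i, (Finset.univ.filter (fun j => (vA (i, j)).isRight = true)).card
          = if (u i).isRight = true then D else 0 := by
        intro i
        rcases hui : u i with a | h₁
        · rw [if_neg (by simp [hui])]
          rw [Finset.card_eq_zero, Finset.filter_eq_empty_iff]
          intro j _
          simp [hvA, hui]
        · rw [if_pos (by simp [hui])]
          rw [← (hstats i).2]
          congr 1
          apply Finset.filter_congr
          intro j _
          rcases hvj : vs i j with x0 | h <;> simp [hvA, hui, hvj]
      refine Eq.trans (cardf_congr (fun a => Iff.rfl))
        ((htrans (fun z => z.isRight = true)).trans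
        (Eq.trans (Finset.sum_congr rfl (fun i _ =>
          Eq.trans (cardf_congr (fun a => Iff.rfl)) (hslotd i))) ?_))
      rw [← Finset.sum_filter, Finset.sum_const, smul_eq_mul]
      have hcard : (Finset.univ.filter (fun i => (u i).isRight = true)).card = dH := by
        convert hdu using 2
      rw [hcard]
  · -- invariance
    rintro p p' ⟨hpp, hp⟩
    have gridEval : ∀ x : G, ∀ q : Fin n1 × Fin NI,
        evalE ι vA x q = evalE ι (vs q.1) (PTA π hπ ι k₀ (u q.1) x) q.2 := by
      intro x q
      rcases hui : u q.1 with a | h₁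
      · simp [evalE, hvA, hui, PTA, hsk]
      · rcases hvj : vs q.1 q.2 with x0 | h
        · simp [evalE, hvA, hui, hvj, PTA]
        · simp only [evalE, hvA, hui, hvj, PTA, Sum.elim_inr, Sum.map_inr]
          rw [map_mul, mul_assoc]
    have hceval : ∀ x : G, c (evalE ι (fun idx => vA (e.symm idx)) x)
        = cGrid (fun i j => evalE ι (vs i) (PTA π hπ ι k₀ (u i) x) j) := by
      intro x
      rw [hcGrid]
      congr 1
      funext idx
      exact gridEval x (e.symm idx)
    rw [hceval p, hceval p']
    rcases List.mem_cons.mp hp with hk | hk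
    · -- the new fiber k₀ : use the outer word u
      have hp' : π p' = k₀ := hpp ▸ hk
      obtain ⟨b, hb⟩ := repr_fiber π ι hπ hrange hk
      obtain ⟨b', hb'⟩ := repr_fiber π ι hπ hrange hp'
      have key : ∀ q : G, ∀ bq : H, q = ι bq * sk →
          (fun i j => evalE ι (vs i) (PTA π hπ ι k₀ (u i) q) j)
            = fun i => evalE ι (vs i) (ι ((evalW u bq) i) * sk) := by
        intro q bq hq
        funext i
        rcases hui : u i with a | h₁
        · simp [PTA, evalW, hui, hsk]
        · simp only [PTA, evalW, hui, Sum.elim_inr]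
          rw [hq, smul_eq_mul, map_mul, mul_assoc]
      rw [key p b hb, key p' b' hb']
      exact huM b b'
    · -- an old fiber : use the inner words via `core`
      have := hinv (fun i => PTA π hπ ι k₀ (u i) p) (fun i => PTA π hπ ι k₀ (u i) p') ?_
      · exact this
      · intro i
        rcases hui : u i with a | h₁
        · left; simp [PTA, hui]
        · right
          simp only [PTA, hui, Sum.elim_inr]
          refine ⟨?_, ?_⟩
          · rw [pi_iota_mul π ι hrange, pi_iota_mul π ι hrange, hpp]
          · rw [pi_iota_mul π ι hrange]; exact hk

end PartA

section PartA2

open scoped Classical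

variable {H G K : Type*} [Group H] [Fintype H] [Group G] [Fintype G] [Group K] [Fintype K]
variable (π : G →* K) (ι : H →* G)

lemma AStageList (hπ : Function.Surjective π) (hrange : ι.range = π.ker)
    {dH : ℕ} (h1 : UHJP H dH) :
    ∀ (t : List K) (k : K), AStage ι (EL π (k :: t)) (dH ^ (t.length + 1)) := by
  intro t
  induction t with
  | nil =>
      intro k
      simpa [pow_one] using ABase π ι hπ hrange h1 k
  | cons k' t' ih =>
      intro k
      have h := AStep π ι hπ hrange h1 (ih k') k
      have harith : dH * dH ^ (t'.length + 1) = dH ^ ((k' :: t').length + 1) := by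
        rw [List.length_cons, pow_succ, mul_comm]
        ring
      rwa [harith] at h

end PartA2

section PartB

open scoped Classical

variable {H G K : Type*} [Group H] [Fintype H] [Group G] [Fintype G] [Group K] [Fintype K]
variable (π : G →* K) (ι : H →* G)

lemma partB (hπ : Function.Surjective π) (hι : Function.Injective ι)
    (hrange : ι.range = π.ker) {dH dK : ℕ} (h1 : UHJP H dH) (h2 : UHJP K dK) :
    UHJP G (dH ^ Fintype.card K * dK) := by
  have hLne : (Finset.univ : Finset K).toList ≠ [] := by
    rw [ne_eq, Finset.toList_eq_nil]
    exact Finset.univ_nonempty.ne_empty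
  obtain ⟨k₁, t, hlt⟩ : ∃ k₁ t, (Finset.univ : Finset K).toList = k₁ :: t := by
    rcases hL : (Finset.univ : Finset K).toList with _ | ⟨a, t⟩
    · exact absurd hL hLne
    · exact ⟨a, t, rfl⟩
  have hA := AStageList π ι hπ hrange h1 t k₁
  have hmem : ∀ κ : K, κ ∈ k₁ :: t := fun κ => hlt ▸ Finset.mem_toList.mpr (Finset.mem_univ κ)
  have hq : t.length + 1 = Fintype.card K := by
    have hlen := Finset.length_toList (Finset.univ : Finset K)
    rw [hlt] at hlen
    simpa [Finset.card_univ] using hlen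
  -- positivity of dH
  have hdH : 0 < dH := by
    obtain ⟨N₁, hN₁⟩ := h1 1
    obtain ⟨u₁, hu₁, -⟩ := hN₁ (fun _ => ⟨0, Nat.one_pos⟩)
    obtain ⟨m₁, hm₁, -, hd₁⟩ := hu₁.deg_eq
    rw [hd₁]
    exact Nat.mul_pos hm₁ Fintype.card_pos
  have hDpos : 0 < dH ^ (t.length + 1) := pow_pos hdH _
  intro r
  obtain ⟨M, hM⟩ := h2 r
  obtain ⟨NI, hcore⟩ := core ι hA M r
  refine ⟨Fintype.card (Fin M × Fin NI), ?_⟩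
  intro c
  set e := Fintype.equivFin (Fin M × Fin NI) with he
  set cGrid : (Fin M → Fin NI → G) → Fin r :=
    fun f => c (fun idx => f (e.symm idx).1 (e.symm idx).2) with hcGrid
  obtain ⟨vs, hstats, hinv⟩ := hcore cGrid
  set Chat : (Fin M → K) → Fin r :=
    fun κ => cGrid (fun m => evalE ι (vs m) (Function.surjInv hπ (κ m))) with hChat
  obtain ⟨uK, huKU, huKM⟩ := hM Chat
  set WA : Fin M × Fin NI → G ⊕ G := fun p =>
    Sum.elim (fun k0 => Sum.inl (evalE ι (vs p.1) (Function.surjInv hπ k0) p.2))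
      (fun k' => Sum.map id (fun h : H => ι h * Function.surjInv hπ k') (vs p.1 p.2)) (uK p.1)
    with hWA
  refine ⟨fun idx => WA (e.symm idx), ?_, ?_⟩
  · -- uniformity
    have hstats1 : ∀ m, ∃ mm : ℕ, 0 < mm ∧ ∀ s : H,
        (Finset.univ.filter (fun j => vs m j = Sum.inr s)).card = mm := fun m => (hstats m).1
    choose mi hmipos hmi using hstats1
    obtain ⟨⟨mK, hmKpos, hmKs⟩, hdK⟩ := huKU
    have hmieq : ∀ m, mi m * Fintype.card H = dH ^ (t.length + 1) := by
      intro m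
      obtain ⟨mm, -, hcnt, hDm⟩ := (hstats m).deg_eq
      have : mi m = mm := by rw [← hmi m 1, hcnt 1]
      rw [this, ← hDm]
    have hMpos : 0 < M := by
      by_contra hM0
      push_neg at hM0
      interval_cases M
      have h0 := hmKs (1 : K)
      have : (Finset.univ : Finset (Fin 0)).card = 0 := rfl
      rw [Finset.filter_true_of_mem (fun x _ => x.elim0)] at h0
      · exact absurd (h0 ▸ hmKpos) (by simp [Finset.card_univ])
    set m0 : Fin M := ⟨0, hMpos⟩ with hm0
    have hmall : ∀ m, mi m = mi m0 := fun m =>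
      Nat.eq_of_mul_eq_mul_right Fintype.card_pos ((hmieq m).trans (hmieq m0).symm)
    -- transport to the product grid
    have htrans : ∀ p : G ⊕ G → Prop,
        (Finset.univ.filter (fun idx => p (WA (e.symm idx)))).card
          = ∑ m : Fin M, (Finset.univ.filter (fun j => p (WA (m, j)))).card := by
      intro p
      have h1' := card_filter_comp_equiv e.symm (fun q : Fin M × Fin NI => p (WA q))
      have h2' := card_filter_curry (fun (m : Fin M) (j : Fin NI) => p (WA (m, j)))
      calc (Finset.univ.filter (fun idx => p (WA (e.symm idx)))).card
          = (Finset.univ.filter (fun q : Fin M × Fin NI => p (WA q))).card := by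
            convert h1' using 2
        _ = ∑ m : Fin M, (Finset.univ.filter (fun j => p (WA (m, j)))).card := by
            convert h2' using 2 <;> (try (ext x; simp))
    have hslot : ∀ (γ : G) (m : Fin M),
        (Finset.univ.filter (fun j => WA (m, j) = Sum.inr γ)).card
          = if uK m = Sum.inr (π γ) then mi m else 0 := by
      intro γ m
      rcases hum : uK m with k0 | k'
      · rw [if_neg (by simp [hum])]
        rw [Finset.card_eq_zero, Finset.filter_eq_empty_iff]
        intro j _
        simp [hWA, hum]
      · by_cases hk : k' = π γ
        · subst hk
          rw [if_pos rfl]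
          obtain ⟨b, hb⟩ := repr_fiber π ι hπ hrange (rfl : π γ = π γ)
          rw [← hmi m b]
          congr 1
          apply Finset.filter_congr
          intro j _
          rcases hvj : vs m j with x0 | h
          · simp [hWA, hum, hvj]
          · simp only [hWA, hum, hvj, Sum.elim_inr, Sum.map_inr, Sum.inr.injEq]
            constructor
            · intro hh
              have : ι h = ι b := by
                have := hh.trans hb
                exact mul_right_cancel this
              rw [hι this]
            · intro hh
              rw [hh, ← hb]
        · rw [if_neg (by intro hc; exact hk (Sum.inr.inj hc))]
          rw [Finset.card_eq_zero, Finset.filter_eq_empty_iff]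
          intro j _
          rcases hvj : vs m j with x0 | h
          · simp [hWA, hum, hvj]
          · simp only [hWA, hum, hvj, Sum.elim_inr, Sum.map_inr, Sum.inr.injEq, ne_eq]
            intro hh
            apply hk
            rw [← hh, pi_iota_mul π ι hrange, Function.surjInv_eq hπ]
    constructor
    · refine ⟨mi m0 * mK, Nat.mul_pos (hmipos m0) hmKpos, ?_⟩
      intro γ
      refine Eq.trans (cardf_congr (fun a => Iff.rfl))
        ((htrans (fun z => z = Sum.inr γ)).trans
        (Eq.trans (Finset.sum_congr rfl (fun m _ =>
          Eq.trans (cardf_congr (fun a => Iff.rfl)) ((hslot γ m).trans (by rw [hmall m])))) ?_))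
      rw [← Finset.sum_filter, Finset.sum_const, smul_eq_mul]
      have hcard : (Finset.univ.filter (fun m => uK m = Sum.inr (π γ))).card = mK := by
        convert hmKs (π γ) using 2
      rw [hcard, mul_comm]
    · have hslotd : ∀ m, (Finset.univ.filter (fun j => (WA (m, j)).isRight = true)).card
          = if (uK m).isRight = true then dH ^ (t.length + 1) else 0 := by
        intro m
        rcases hum : uK m with k0 | k'
        · rw [if_neg (by simp [hum])]
          rw [Finset.card_eq_zero, Finset.filter_eq_empty_iff]
          intro j _
          simp [hWA, hum]
        · rw [if_pos (by simp [hum])]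
          rw [← (hstats m).2]
          congr 1
          apply Finset.filter_congr
          intro j _
          rcases hvj : vs m j with x0 | h <;> simp [hWA, hum, hvj]
      refine Eq.trans (cardf_congr (fun a => Iff.rfl))
        ((htrans (fun z => z.isRight = true)).trans
        (Eq.trans (Finset.sum_congr rfl (fun m _ =>
          Eq.trans (cardf_congr (fun a => Iff.rfl)) (hslotd m))) ?_))
      rw [← Finset.sum_filter, Finset.sum_const, smul_eq_mul]
      have hcard : (Finset.univ.filter (fun m => (uK m).isRight = true)).card = dK := by
        convert hdK using 2
      rw [hcard, hq, mul_comm]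
  · -- monochromaticity
    intro g g'
    have hceval : ∀ g : G, c (evalW (fun idx => WA (e.symm idx)) g)
        = cGrid (fun m => evalE ι (vs m)
            (Sum.elim (fun k0 => Function.surjInv hπ k0)
              (fun k' => Function.surjInv hπ k' * g) (uK m))) := by
      intro g
      rw [hcGrid]
      congr 1
      funext idx
      show Sum.elim id (fun s => s • g) (WA (e.symm idx)) = _
      rcases hum : uK (e.symm idx).1 with k0 | k'
      · simp [hWA, hum, evalE]
      · rcases hvj : vs (e.symm idx).1 (e.symm idx).2 with x0 | h
        · simp [hWA, hum, hvj, evalE]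
        · simp only [hWA, hum, hvj, Sum.elim_inr, Sum.map_inr, evalE, smul_eq_mul]
          rw [mul_assoc]
    have hbridge : ∀ g : G, c (evalW (fun idx => WA (e.symm idx)) g)
        = Chat (evalW uK (π g)) := by
      intro g
      rw [hceval g]
      have := hinv (fun m => Sum.elim (fun k0 => Function.surjInv hπ k0)
            (fun k' => Function.surjInv hπ k' * g) (uK m))
          (fun m => Function.surjInv hπ ((evalW uK (π g)) m)) ?_
      · rw [this, hChat]
      · intro m
        rcases hum : uK m with k0 | k'
        · left
          simp [hum, evalW]
        · right
          simp only [hum, Sum.elim_inr, evalW, smul_eq_mul]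
          constructor
          · rw [map_mul, Function.surjInv_eq hπ, Function.surjInv_eq hπ]
          · rw [map_mul, Function.surjInv_eq hπ]
            exact hmem _
    rw [hbridge g, hbridge g', huKM (π g) (π g')]

end PartB

/-- If `G` is an extension of `K` by `H`, `H` has the `d_H`-UHJP and `K` has the `d_K`-UHJP,
then `G` has the `d`-UHJP where `d = d_H^{|K|} · d_K`. -/
theorem UHJP_extension (H G K : Type*) [Group H] [Fintype H] [Group G] [Fintype G]
    [Group K] [Fintype K]
    (π : G →* K) (hπ : Function.Surjective π)
    (ι : H →* G) (hι : Function.Injective ι)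
    (hrange : ι.range = π.ker)
    (dH dK : ℕ) (h1 : UHJP H dH) (h2 : UHJP K dK) :
    UHJP G (dH ^ Nat.card K * dK) := by
  have h := partB π ι hπ hι hrange h1 h2
  rwa [Nat.card_eq_fintype_card]
end

section
/- Let G be a finite group with the d-UHJP and H a subgroup of G. Then H has the d-UHJP. -/
/-- Projection onto `H` along a left transversal: `g = τ(g) * piH H g` where
`τ(g) = ((g : G ⧸ H)).out'`. -/
noncomputable def piH {G : Type*} [Group G] (H : Subgroup G) (g : G) : H :=
  ⟨(Quotient.out (QuotientGroup.mk g : G ⧸ H))⁻¹ * g, by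
    have h1 : (QuotientGroup.mk (Quotient.out (QuotientGroup.mk g : G ⧸ H)) : G ⧸ H)
        = QuotientGroup.mk g := QuotientGroup.out_eq' _
    exact (QuotientGroup.eq).mp h1⟩

lemma piH_mul {G : Type*} [Group G] (H : Subgroup G) (g : G) (h : H) :
    piH H (g * h) = piH H g * h := by
  have hq : (QuotientGroup.mk (g * (h : G)) : G ⧸ H) = QuotientGroup.mk g := by
    refine (QuotientGroup.eq).mpr ?_
    have : (g * (h : G))⁻¹ * g = (h : G)⁻¹ := by group
    rw [this]
    exact H.inv_mem h.2
  apply Subtype.ext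
  simp only [piH, Subgroup.coe_mul, hq]
  group

lemma piH_out' {G : Type*} [Group G] (H : Subgroup G) (q : G ⧸ H) :
    piH H (Quotient.out q) = 1 := by
  have h1 : (QuotientGroup.mk (Quotient.out q) : G ⧸ H) = q := QuotientGroup.out_eq' q
  apply Subtype.ext
  simp only [piH, h1, OneMemClass.coe_one]
  group

/-- If a finite group `G` has the `d`-UHJP, then so does every subgroup of `G`. -/
theorem UHJP_subgroup (G : Type*) [Group G] [Fintype G] (d : ℕ) (hG : UHJP G d)
    (H : Subgroup G) : UHJP (↥H) d := by
  classical
  intro r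
  obtain ⟨N, hN⟩ := hG r
  refine ⟨N, fun c => ?_⟩
  set π : G → H := piH H with hπ
  obtain ⟨w, ⟨⟨m, hm, hcount⟩, hdeg⟩, hmono⟩ := hN (fun f => c (fun i => π (f i)))
  set w' : Fin N → ↥H ⊕ ↥H := fun i => Sum.map π π (w i) with hw'
  -- evaluation is compatible with the projection
  have heval : ∀ h : H, (fun i => π (evalW w (h : G) i)) = evalW w' h := by
    intro h
    funext i
    simp only [evalW, hw']
    cases hwi : w i with
    | inl x => simp
    | inr s =>
      simp only [Sum.map_inr, Sum.elim_inr, smul_eq_mul]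
      exact piH_mul H s h
  -- all fibers of π have the same cardinality
  have fib : ∀ h : H, (Finset.univ.filter fun s : G => π s = h).card
      = (Finset.univ.filter fun s : G => π s = 1).card := by
    intro h
    apply Finset.card_bij' (fun s _ => s * (h : G)⁻¹) (fun t _ => t * (h : G))
    · intro s hs
      simp only [Finset.mem_filter, Finset.mem_univ, true_and] at hs ⊢
      have : (h : G)⁻¹ = ((h⁻¹ : H) : G) := rfl
      rw [this, hπ, piH_mul]
      rw [hπ] at hs
      rw [hs, mul_inv_cancel]
    · intro t ht
      simp only [Finset.mem_filter, Finset.mem_univ, true_and] at ht ⊢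
      rw [hπ, piH_mul]
      rw [hπ] at ht
      rw [ht, one_mul]
    · intro s _; group
    · intro t _; group
  -- the fiber of 1 is nonempty
  have fib1 : 0 < (Finset.univ.filter fun s : G => π s = 1).card := by
    refine Finset.card_pos.mpr ⟨Quotient.out (QuotientGroup.mk (1 : G) : G ⧸ H), ?_⟩
    simp only [Finset.mem_filter, Finset.mem_univ, true_and, hπ]
    exact piH_out' H _
  -- counting the variables of `w'`
  have key : ∀ h : H, (Finset.univ.filter fun i => w' i = Sum.inr h).card
      = (Finset.univ.filter fun s : G => π s = 1).card * m := by
    intro h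
    have hsplit : (Finset.univ.filter fun i : Fin N => w' i = Sum.inr h)
        = (Finset.univ.filter fun s : G => π s = h).biUnion
          (fun s => Finset.univ.filter fun i => w i = Sum.inr s) := by
      ext i
      simp only [Finset.mem_filter, Finset.mem_biUnion, Finset.mem_univ, true_and, hw']
      constructor
      · intro hi
        cases hwi : w i with
        | inl x => rw [hwi] at hi; simp at hi
        | inr s =>
          rw [hwi] at hi
          simp only [Sum.map_inr, Sum.inr.injEq] at hi
          exact ⟨s, hi, rfl⟩
      · rintro ⟨s, hs, hws⟩
        rw [hws]
        simp [hs]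
    rw [hsplit, Finset.card_biUnion]
    · rw [Finset.sum_congr rfl (fun s _ => hcount s), Finset.sum_const, smul_eq_mul, fib]
    · intro s _ s' _ hss
      simp only [Finset.disjoint_left, Finset.mem_filter, Finset.mem_univ, true_and]
      intro i h1 h2
      exact hss (Sum.inr.inj (h1.symm.trans h2))
  refine ⟨w', ⟨⟨(Finset.univ.filter fun s : G => π s = 1).card * m,
    Nat.mul_pos fib1 hm, fun h => ?_⟩, ?_⟩, fun h h' => ?_⟩
  · convert key h using 3
  · rw [← hdeg]
    congr 1
    ext i
    simp only [Finset.mem_filter, Finset.mem_univ, true_and, hw']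
    cases w i <;> simp
  · have := hmono (h : G) (h' : G)
    simpa only [heval] using this
end

section
/- Let G be a finite group with the d-UHJP and H a normal subgroup of G. Then the quotient group G/H has the d-UHJP. -/
/-! A monochromatic uniform word for the colouring `c ∘ φ` of `G^N` is pushed forward along a
surjective homomorphism `φ : G →* K`: each variable `v_s` becomes `v_(φ s)`. All fibres of `φ`
are cosets of its kernel, so every merged variable occurs equally often and the pushed word is
again uniform of degree `d`. -/

open Finset

open scoped Classical

section VariableWords

variable {S T X Y : Type*} {N : ℕ}

lemma evalW_map [SMul S X] [SMul T Y] (w : Fin N → X ⊕ S) (f : X → Y) (ψ : S → T)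
    (hf : ∀ (s : S) (x : X), f (s • x) = ψ s • f x) (x : X) :
    evalW (Sum.map f ψ ∘ w) (f x) = f ∘ evalW w x := by
  funext i
  simp only [evalW, Function.comp_apply]
  cases w i <;> simp [hf]

lemma card_filter_map_eq_inr_s18 [Fintype S] (w : Fin N → X ⊕ S) (f : X → Y) (ψ : S → T) (t : T) :
    #{i | Sum.map f ψ (w i) = Sum.inr t} = ∑ s with ψ s = t, #{i | w i = Sum.inr s} := by
  rw [← card_biUnion fun s _ s' _ hne =>
    disjoint_filter.2 fun i _ h h' => hne (Sum.inr_injective (h.symm.trans h'))]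
  congr 1
  ext i
  simp only [mem_filter, mem_univ, true_and, mem_biUnion]
  cases w i <;> simp

lemma IsUnifWord.map [Fintype S] {w : Fin N → X ⊕ S} {d : ℕ} (hw : IsUnifWord w d)
    (f : X → Y) (ψ : S → T) {k : ℕ} (hk : 0 < k) (hψ : ∀ t, #{s | ψ s = t} = k) :
    IsUnifWord (Sum.map f ψ ∘ w) d := by
  obtain ⟨⟨m, hm, hcount⟩, hdeg⟩ := hw
  refine ⟨⟨k * m, Nat.mul_pos hk hm, fun t => ?_⟩, ?_⟩
  · simp only [Function.comp_apply, card_filter_map_eq_inr_s18, hcount, sum_const, hψ, smul_eq_mul]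
  · simpa only [Function.comp_apply, Sum.isRight_map] using hdeg

end VariableWords

lemma MonoidHom.card_fiber_eq_card_fiber_one {G K : Type*} [Group G] [Fintype G] [Group K]
    (φ : G →* K) (hφ : Function.Surjective φ) (t : K) : #{g | φ g = t} = #{g | φ g = 1} :=
  MonoidHom.card_fiber_eq_of_mem_range φ (hφ t) ⟨1, map_one φ⟩

theorem UHJP.of_surjective {G K : Type*} [Group G] [Fintype G] [Group K] {d : ℕ}
    (hG : UHJP G d) (φ : G →* K) (hφ : Function.Surjective φ) : UHJP K d := by
  intro r
  obtain ⟨N, hN⟩ := hG r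
  refine ⟨N, fun c => ?_⟩
  obtain ⟨w, hw, hmono⟩ := hN fun x => c (φ ∘ x)
  have hker : 0 < #{g | φ g = 1} := card_pos.2 ⟨1, by simp⟩
  refine ⟨Sum.map φ φ ∘ w, hw.map φ φ hker (φ.card_fiber_eq_card_fiber_one hφ), ?_⟩
  have heval : ∀ g, evalW (Sum.map φ φ ∘ w) (φ g) = φ ∘ evalW w g :=
    evalW_map w φ φ fun s x => map_mul φ s x
  intro k k'
  obtain ⟨g, rfl⟩ := hφ k
  obtain ⟨g', rfl⟩ := hφ k'
  rw [heval, heval]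
  exact hmono g g'

/-- If a finite group `G` has the `d`-UHJP, then so does every quotient `G/H` by a normal
subgroup `H`. -/
theorem UHJP_quotient (G : Type*) [Group G] [Fintype G] (d : ℕ) (hG : UHJP G d)
    (H : Subgroup G) [H.Normal] : UHJP (G ⧸ H) d :=
  hG.of_surjective (QuotientGroup.mk' H) (QuotientGroup.mk'_surjective H)
end
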